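/- arXiv:1808.09724 — 9 statements merged into one kernel-verified Lean document; each statement's English description precedes it below -/
import Mathlib

section
/- For the middle-third Cantor set C, the difference set C − C = {x − y : x, y ∈ C} equals the interval [−1, 1]. -/
/-- For the middle-third Cantor set `C` (the unique nonempty compact set with
`C = C/3 ∪ (C+2)/3`), the difference set `C - C` equals `[-1, 1]`. -/
theorem cantor_diff_eq_Icc (C : Set ℝ) (hne : C.Nonempty) (hc : IsCompact C)
    (hself : C = (fun x : ℝ => x / 3) '' C ∪ (fun x : ℝ => (x + 2) / 3) '' C) :
    {z : ℝ | ∃ x ∈ C, ∃ y ∈ C, z = x - y} = Set.Icc (-1 : ℝ) 1 := by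
  obtain ⟨M, hMmem, hMub⟩ := hc.exists_isGreatest hne
  obtain ⟨m, hmmem, hmlb⟩ := hc.exists_isLeast hne
  have hM1 : M ≤ 1 := by
    have hM' := hself ▸ hMmem
    rcases hM' with ⟨a, ha, hae⟩ | ⟨a, ha, hae⟩
    · have := hMub ha; simp only at hae; linarith
    · have := hMub ha; simp only at hae; linarith
  have hm0 : 0 ≤ m := by
    have hm' := hself ▸ hmmem
    rcases hm' with ⟨a, ha, hae⟩ | ⟨a, ha, hae⟩
    · have := hmlb ha; simp only at hae; linarith
    · have := hmlb ha; simp only at hae; linarith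
  have hC01 : ∀ x ∈ C, 0 ≤ x ∧ x ≤ 1 :=
    fun x hx => ⟨le_trans hm0 (hmlb hx), le_trans (hMub hx) hM1⟩
  -- membership helpers
  have memL : ∀ x ∈ C, x / 3 ∈ C := by
    intro x hx
    rw [hself]
    exact Set.mem_union_left _ ⟨x, hx, rfl⟩
  have memR : ∀ x ∈ C, (x + 2) / 3 ∈ C := by
    intro x hx
    rw [hself]
    exact Set.mem_union_right _ ⟨x, hx, rfl⟩
  -- approximation
  have key : ∀ n : ℕ, ∀ z ∈ Set.Icc (-1 : ℝ) 1,
      ∃ x ∈ C, ∃ y ∈ C, |x - y - z| ≤ 2 / 3 ^ n := by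
    intro n
    induction n with
    | zero =>
      intro z hz
      obtain ⟨c, hcC⟩ := hne
      refine ⟨c, hcC, c, hcC, ?_⟩
      rw [abs_le]
      obtain ⟨h1, h2⟩ := hz
      constructor <;> norm_num <;> linarith
    | succ n ih =>
      intro z hz
      obtain ⟨hz1, hz2⟩ := hz
      have h3 : (0:ℝ) < 3 ^ n := by positivity
      rcases le_or_gt z (-1/3) with h | h
      · obtain ⟨x, hx, y, hy, hxy⟩ := ih (3 * z + 2) ⟨by linarith, by linarith⟩
        refine ⟨x / 3, memL x hx, (y + 2) / 3, memR y hy, ?_⟩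
        have heq : x / 3 - (y + 2) / 3 - z = (x - y - (3 * z + 2)) / 3 := by ring
        rw [heq, abs_div, abs_of_pos (by norm_num : (0:ℝ) < 3), pow_succ]
        rw [div_le_div_iff₀ (by norm_num) (by positivity)]
        nlinarith [(le_div_iff₀ h3).mp hxy]
        -- extra hints below unused
        -- nlinarith [abs_nonneg (x - y - (3 * z + 2))]
      · rcases le_or_gt z (1/3) with h' | h'
        · obtain ⟨x, hx, y, hy, hxy⟩ := ih (3 * z) ⟨by linarith, by linarith⟩
          refine ⟨x / 3, memL x hx, y / 3, memL y hy, ?_⟩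
          have heq : x / 3 - y / 3 - z = (x - y - 3 * z) / 3 := by ring
          rw [heq, abs_div, abs_of_pos (by norm_num : (0:ℝ) < 3), pow_succ]
          rw [div_le_div_iff₀ (by norm_num) (by positivity)]
          nlinarith [(le_div_iff₀ h3).mp hxy]
          -- nlinarith [abs_nonneg (x - y - 3 * z)]
        · obtain ⟨x, hx, y, hy, hxy⟩ := ih (3 * z - 2) ⟨by linarith, by linarith⟩
          refine ⟨(x + 2) / 3, memR x hx, y / 3, memL y hy, ?_⟩
          have heq : (x + 2) / 3 - y / 3 - z = (x - y - (3 * z - 2)) / 3 := by ring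
          rw [heq, abs_div, abs_of_pos (by norm_num : (0:ℝ) < 3), pow_succ]
          rw [div_le_div_iff₀ (by norm_num) (by positivity)]
          nlinarith [(le_div_iff₀ h3).mp hxy]
          -- nlinarith [abs_nonneg (x - y - (3 * z - 2))]
  -- the difference set is compact
  have hDcomp : IsCompact {z : ℝ | ∃ x ∈ C, ∃ y ∈ C, z = x - y} := by
    have hEq : {z : ℝ | ∃ x ∈ C, ∃ y ∈ C, z = x - y}
        = (fun p : ℝ × ℝ => p.1 - p.2) '' (C ×ˢ C) := by
      ext z
      constructor
      · rintro ⟨x, hx, y, hy, rfl⟩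
        exact ⟨(x, y), ⟨hx, hy⟩, rfl⟩
      · rintro ⟨⟨x, y⟩, ⟨hx, hy⟩, rfl⟩
        exact ⟨x, hx, y, hy, rfl⟩
    rw [hEq]
    exact (hc.prod hc).image (continuous_fst.sub continuous_snd)
  ext z
  constructor
  · rintro ⟨x, hx, y, hy, rfl⟩
    obtain ⟨hx0, hx1⟩ := hC01 x hx
    obtain ⟨hy0, hy1⟩ := hC01 y hy
    exact ⟨by linarith, by linarith⟩
  · intro hz
    have hcl := hDcomp.isClosed
    rw [← hcl.closure_eq, Real.mem_closure_iff]
    intro ε hε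
    obtain ⟨n, hn⟩ := exists_pow_lt_of_lt_one (half_pos hε)
      (by norm_num : (1:ℝ)/3 < 1)
    have hn' : 2 / 3 ^ n < ε := by
      have : ((1:ℝ)/3) ^ n = 1 / 3 ^ n := by rw [div_pow, one_pow]
      rw [this] at hn
      rw [div_lt_iff₀ (by positivity)] at hn ⊢
      linarith
    obtain ⟨x, hx, y, hy, hxy⟩ := key n z hz
    exact ⟨x - y, ⟨x, hx, y, hy, rfl⟩, lt_of_le_of_lt hxy hn'⟩
end

section
/- For the middle-third Cantor set C, the point 1/3 has exactly three representations as a difference of two elements of C; that is, the set {(x, y) ∈ C × C : y − x = 1/3} has cardinality exactly 3, its elements being (0, 1/3), (1/3, 2/3), and (2/3, 1). -/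
/-- For the middle-third Cantor set `C`, the point `1/3` has exactly three representations
as a difference of two elements of `C`: the set `{(x, y) ∈ C × C : y - x = 1/3}` is exactly
`{(0, 1/3), (1/3, 2/3), (2/3, 1)}` and has cardinality `3`. -/
theorem cantor_third_three_representations (C : Set ℝ) (hne : C.Nonempty) (hc : IsCompact C)
    (hself : C = (fun x : ℝ => x / 3) '' C ∪ (fun x : ℝ => (x + 2) / 3) '' C) :
    {p : ℝ × ℝ | p.1 ∈ C ∧ p.2 ∈ C ∧ p.2 - p.1 = 1 / 3}
      = {((0 : ℝ), (1 / 3 : ℝ)), (1 / 3, 2 / 3), (2 / 3, 1)} ∧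
    {p : ℝ × ℝ | p.1 ∈ C ∧ p.2 ∈ C ∧ p.2 - p.1 = 1 / 3}.ncard = 3 := by
  have hmem : ∀ z : ℝ, z ∈ C ↔ (∃ c ∈ C, c / 3 = z) ∨ ∃ c ∈ C, (c + 2) / 3 = z := by
    intro z
    conv_lhs => rw [hself]
    simp [Set.mem_union, Set.mem_image]
  have hbdA := hc.bddAbove
  have hbdB := hc.bddBelow
  have haC : sInf C ∈ C := hc.sInf_mem hne
  have hbC : sSup C ∈ C := hc.sSup_mem hne
  have hgb : (sSup C + 2) / 3 ∈ C := (hmem _).2 (Or.inr ⟨sSup C, hbC, rfl⟩)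
  have hfa : sInf C / 3 ∈ C := (hmem _).2 (Or.inl ⟨sInf C, haC, rfl⟩)
  have hb1 : sSup C = 1 := by
    have h1 : (sSup C + 2) / 3 ≤ sSup C := le_csSup hbdA hgb
    have h2 : sSup C ≤ 1 := by
      rcases (hmem _).1 hbC with ⟨c, hcC, hc'⟩ | ⟨c, hcC, hc'⟩
      · have hcb : c ≤ sSup C := le_csSup hbdA hcC
        linarith
      · have hcb : c ≤ sSup C := le_csSup hbdA hcC
        linarith
    linarith
  have ha0 : sInf C = 0 := by
    have h1 : sInf C ≤ sInf C / 3 := csInf_le hbdB hfa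
    rcases (hmem _).1 haC with ⟨c, hcC, hc'⟩ | ⟨c, hcC, hc'⟩
    · have hcb : sInf C ≤ c := csInf_le hbdB hcC
      linarith
    · have hcb : sInf C ≤ c := csInf_le hbdB hcC
      linarith
  have h0 : (0 : ℝ) ∈ C := ha0 ▸ haC
  have h1 : (1 : ℝ) ∈ C := hb1 ▸ hbC
  have h13 : (1 / 3 : ℝ) ∈ C := (hmem _).2 (Or.inl ⟨1, h1, by norm_num⟩)
  have h23 : (2 / 3 : ℝ) ∈ C := (hmem _).2 (Or.inr ⟨0, h0, by norm_num⟩)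
  have hub : ∀ z ∈ C, z ≤ 1 := fun z hz => hb1 ▸ le_csSup hbdA hz
  have hlb : ∀ z ∈ C, 0 ≤ z := fun z hz => ha0 ▸ csInf_le hbdB hz
  have hsplit : ∀ z ∈ C, z ≤ 1 / 3 ∨ 2 / 3 ≤ z := by
    intro z hz
    rcases (hmem _).1 hz with ⟨c, hcC, hc'⟩ | ⟨c, hcC, hc'⟩
    · left
      have := hub c hcC
      linarith
    · right
      have := hlb c hcC
      linarith
  have hset : {p : ℝ × ℝ | p.1 ∈ C ∧ p.2 ∈ C ∧ p.2 - p.1 = 1 / 3}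
      = {((0 : ℝ), (1 / 3 : ℝ)), (1 / 3, 2 / 3), (2 / 3, 1)} := by
    ext ⟨x, y⟩
    simp only [Set.mem_setOf_eq, Set.mem_insert_iff, Set.mem_singleton_iff, Prod.mk.injEq]
    constructor
    · rintro ⟨hx, hy, hxy⟩
      have hx0 := hlb x hx
      have hy1 := hub y hy
      rcases hsplit x hx with hx' | hx'
      · rcases hsplit y hy with hy' | hy'
        · exact Or.inl ⟨by linarith, by linarith⟩
        · exact Or.inr (Or.inl ⟨by linarith, by linarith⟩)
      · rcases hsplit y hy with hy' | hy'
        · linarith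
        · exact Or.inr (Or.inr ⟨by linarith, by linarith⟩)
    · rintro (⟨hx, hy⟩ | ⟨hx, hy⟩ | ⟨hx, hy⟩) <;> subst hx <;> subst hy
      · exact ⟨h0, h13, by norm_num⟩
      · exact ⟨h13, h23, by norm_num⟩
      · exact ⟨h23, h1, by norm_num⟩
  refine ⟨hset, ?_⟩
  rw [hset, Set.ncard_eq_three]
  exact ⟨_, _, _, by norm_num [Prod.ext_iff], by norm_num [Prod.ext_iff],
    by norm_num [Prod.ext_iff], rfl⟩
end

section
/- For the middle-third Cantor set C, the sum set C + C = {x + y : x, y ∈ C} equals the interval [0, 2]. -/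
/-- Apply the maps `w ↦ (a i + w)/3` for the first `n` digits to the seed `c`. -/
noncomputable def cantorF (c : ℝ) : ℕ → (ℕ → ℝ) → ℝ
  | 0, _ => c
  | n + 1, a => (a 0 + cantorF c n (fun i => a (i + 1))) / 3

/-- For the middle-third Cantor set `C`, the sum set `C + C` equals `[0, 2]`. -/
theorem cantor_sum_eq_Icc (C : Set ℝ) (hne : C.Nonempty) (hc : IsCompact C)
    (hself : C = (fun x : ℝ => x / 3) '' C ∪ (fun x : ℝ => (x + 2) / 3) '' C) :
    {z : ℝ | ∃ x ∈ C, ∃ y ∈ C, z = x + y} = Set.Icc (0 : ℝ) 2 := by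
  obtain ⟨c, hcC⟩ := hne
  -- C ⊆ [0,1]
  have hMmem : sSup C ∈ C := hc.sSup_mem ⟨c, hcC⟩
  have hmmem : sInf C ∈ C := hc.sInf_mem ⟨c, hcC⟩
  have hle : ∀ x ∈ C, x ≤ sSup C := fun x hx => le_csSup hc.bddAbove hx
  have hge : ∀ x ∈ C, sInf C ≤ x := fun x hx => csInf_le hc.bddBelow hx
  have hM1 : sSup C ≤ 1 := by
    have h := hself.subset hMmem
    rcases h with ⟨w, hw, hwe⟩ | ⟨w, hw, hwe⟩
    · have := hle w hw
      simp only at hwe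
      nlinarith
    · have := hle w hw
      simp only at hwe
      nlinarith
  have hm0 : 0 ≤ sInf C := by
    have h := hself.subset hmmem
    rcases h with ⟨w, hw, hwe⟩ | ⟨w, hw, hwe⟩
    · have := hge w hw
      simp only at hwe
      nlinarith
    · have := hge w hw
      simp only at hwe
      nlinarith
  have hsub : C ⊆ Set.Icc (0 : ℝ) 1 := fun x hx =>
    ⟨le_trans hm0 (hge x hx), le_trans (hle x hx) hM1⟩
  -- closure of C under prepending digits
  have hstep : ∀ w ∈ C, ∀ d : ℝ, d = 0 ∨ d = 2 → (d + w) / 3 ∈ C := by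
    intro w hw d hd
    rcases hd with rfl | rfl
    · rw [hself]
      exact Or.inl ⟨w, hw, by norm_num⟩
    · rw [hself]
      exact Or.inr ⟨w, hw, by ring_nf⟩
  -- membership of cantorF in C
  have hFmem : ∀ n : ℕ, ∀ a : ℕ → ℝ, (∀ i, a i = 0 ∨ a i = 2) → cantorF c n a ∈ C := by
    intro n
    induction n with
    | zero => intro a _; exact hcC
    | succ n ih =>
      intro a ha
      exact hstep _ (ih _ (fun i => ha (i + 1))) (a 0) (ha 0)
  -- formula for cantorF
  have hFeq : ∀ n : ℕ, ∀ a : ℕ → ℝ,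
      cantorF c n a = (∑ i ∈ Finset.range n, a i / 3 ^ (i + 1)) + c / 3 ^ n := by
    intro n
    induction n with
    | zero => intro a; simp [cantorF]
    | succ n ih =>
      intro a
      rw [show cantorF c (n + 1) a = (a 0 + cantorF c n (fun i => a (i + 1))) / 3 from rfl,
        ih, Finset.sum_range_succ']
      have hterm : ∀ i ∈ Finset.range n,
          a (i + 1) / 3 ^ (i + 1 + 1) = (a (i + 1) / 3 ^ (i + 1)) / 3 := by
        intro i _
        rw [pow_succ, div_div]
      rw [Finset.sum_congr rfl hterm, ← Finset.sum_div, pow_succ]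
      ring
  -- summability of digit series
  have hgeo : Summable fun i : ℕ => (1 / 3 : ℝ) ^ i :=
    summable_geometric_of_lt_one (by norm_num) (by norm_num)
  have hsum : ∀ a : ℕ → ℝ, (∀ i, a i = 0 ∨ a i = 2) →
      Summable fun i : ℕ => a i / 3 ^ (i + 1) := by
    intro a ha
    refine Summable.of_nonneg_of_le (fun i => ?_) (fun i => ?_) (hgeo.mul_left 2)
    · rcases ha i with h | h <;> rw [h] <;> positivity
    · 
      have h3 : (0 : ℝ) < 3 ^ (i + 1) := by positivity
      rw [div_le_iff₀ h3]
      have hkey : (1 / 3 : ℝ) ^ i * 3 ^ (i + 1) = 3 := by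
        rw [one_div, inv_pow, pow_succ]
        field_simp
      rcases ha i with h | h <;> nlinarith [hkey]
  -- for digit sequences with values in {0,2}, the series sum lies in C
  have hlimC : ∀ a : ℕ → ℝ, (∀ i, a i = 0 ∨ a i = 2) →
      (∑' i : ℕ, a i / 3 ^ (i + 1)) ∈ C := by
    intro a ha
    have hS := (hsum a ha).hasSum
    have htend : Filter.Tendsto (fun n => ∑ i ∈ Finset.range n, a i / 3 ^ (i + 1))
        Filter.atTop (nhds (∑' i : ℕ, a i / 3 ^ (i + 1))) := hS.tendsto_sum_nat
    have hc0 : Filter.Tendsto (fun n : ℕ => c / 3 ^ n) Filter.atTop (nhds 0) := by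
      have : Filter.Tendsto (fun n : ℕ => c * (1 / 3 : ℝ) ^ n) Filter.atTop (nhds (c * 0)) :=
        (tendsto_pow_atTop_nhds_zero_of_lt_one (by norm_num) (by norm_num)).const_mul c
      simpa [one_div, inv_pow, div_eq_mul_inv] using this
    have hFt : Filter.Tendsto (fun n => cantorF c n a) Filter.atTop
        (nhds (∑' i : ℕ, a i / 3 ^ (i + 1))) := by
      have := htend.add hc0
      rw [add_zero] at this
      refine this.congr fun n => ?_
      rw [hFeq n a]
    exact hc.isClosed.mem_of_tendsto hFt
      (Filter.Eventually.of_forall fun n => hFmem n a ha)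
  -- main set equality
  ext z
  simp only [Set.mem_setOf_eq, Set.mem_Icc]
  constructor
  · rintro ⟨x, hx, y, hy, rfl⟩
    obtain ⟨hx0, hx1⟩ := hsub hx
    obtain ⟨hy0, hy1⟩ := hsub hy
    constructor <;> linarith
  · rintro ⟨hz0, hz2⟩
    -- digit extraction for z ∈ [0,2] with digits in {0,2,4}
    have key : ∀ r : Set.Icc (0 : ℝ) 2, ∃ d : ℝ, (d = 0 ∨ d = 2 ∨ d = 4) ∧
        3 * (r : ℝ) - d ∈ Set.Icc (0 : ℝ) 2 := by
      rintro ⟨r, hr0, hr2⟩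
      rcases le_or_gt r (2 / 3) with h | h
      · exact ⟨0, Or.inl rfl, Set.mem_Icc.mpr ⟨by linarith, by linarith⟩⟩
      · rcases le_or_gt r (4 / 3) with h2 | h2
        · exact ⟨2, Or.inr (Or.inl rfl), Set.mem_Icc.mpr ⟨by linarith, by linarith⟩⟩
        · exact ⟨4, Or.inr (Or.inr rfl), Set.mem_Icc.mpr ⟨by linarith, by linarith⟩⟩
    choose d hd1 hd2 using key
    set R : ℕ → Set.Icc (0 : ℝ) 2 := fun n =>
      Nat.rec ⟨z, hz0, hz2⟩ (fun _ r => ⟨3 * (r : ℝ) - d r, hd2 r⟩) n with hR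
    set e : ℕ → ℝ := fun n => d (R n) with he_def
    have hRs : ∀ n, (R (n + 1) : ℝ) = 3 * (R n : ℝ) - e n := fun n => rfl
    have he : ∀ n, e n = 0 ∨ e n = 2 ∨ e n = 4 := fun n => hd1 (R n)
    -- partial sum identity
    have hps : ∀ n : ℕ, z = (∑ i ∈ Finset.range n, e i / 3 ^ (i + 1)) + (R n : ℝ) / 3 ^ n := by
      intro n
      induction n with
      | zero => simp [hR]
      | succ n ih =>
        rw [ih, Finset.sum_range_succ]
        have h3 : (3 : ℝ) ^ n ≠ 0 := by positivity
        have := hRs n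
        rw [pow_succ]
        field_simp
        nlinarith [this]
    -- split digits
    set a : ℕ → ℝ := fun i => if e i = 4 then 2 else 0 with ha_def
    set b : ℕ → ℝ := fun i => e i - a i with hb_def
    have ha : ∀ i, a i = 0 ∨ a i = 2 := by
      intro i
      by_cases h : e i = 4 <;> simp [ha_def, h]
    have hb : ∀ i, b i = 0 ∨ b i = 2 := by
      intro i
      rcases he i with h | h | h <;> norm_num [hb_def, ha_def, h]
    have hab : ∀ i, e i = a i + b i := by intro i; simp [hb_def]
    refine ⟨∑' i : ℕ, a i / 3 ^ (i + 1), hlimC a ha,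
      ∑' i : ℕ, b i / 3 ^ (i + 1), hlimC b hb, ?_⟩
    -- partial sums of e tend to z
    have hr0 : Filter.Tendsto (fun n : ℕ => (R n : ℝ) / 3 ^ n) Filter.atTop (nhds 0) := by
      have h2 : Filter.Tendsto (fun n : ℕ => 2 * (1 / 3 : ℝ) ^ n) Filter.atTop (nhds (2 * 0)) :=
        (tendsto_pow_atTop_nhds_zero_of_lt_one (by norm_num) (by norm_num)).const_mul 2
      rw [mul_zero] at h2
      refine squeeze_zero (fun n => div_nonneg (R n).2.1 (by positivity)) (fun n => ?_) h2
      have h3 : (0 : ℝ) < 3 ^ n := by positivity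
      rw [div_le_iff₀ h3]
      have hkey : (1 / 3 : ℝ) ^ n * 3 ^ n = 1 := by
        rw [one_div, inv_pow]
        field_simp
      nlinarith [(R n).2.2, hkey]
    have hse : Filter.Tendsto (fun n => ∑ i ∈ Finset.range n, e i / 3 ^ (i + 1))
        Filter.atTop (nhds z) := by
      have h := (tendsto_const_nhds (x := z) (f := Filter.atTop (α := ℕ))).sub hr0
      rw [sub_zero] at h
      refine h.congr fun n => ?_
      have := hps n
      linarith
    have hsab : Filter.Tendsto (fun n => ∑ i ∈ Finset.range n, e i / 3 ^ (i + 1))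
        Filter.atTop
        (nhds ((∑' i : ℕ, a i / 3 ^ (i + 1)) + ∑' i : ℕ, b i / 3 ^ (i + 1))) := by
      have h := ((hsum a ha).hasSum.tendsto_sum_nat).add ((hsum b hb).hasSum.tendsto_sum_nat)
      refine h.congr fun n => ?_
      rw [← Finset.sum_add_distrib]
      apply Finset.sum_congr rfl
      intro i _
      rw [hab i, add_div]
    exact tendsto_nhds_unique hse hsab
end

section
/- Let H be a finite strongly connected directed graph whose adjacency matrix N satisfies ρ(N) ≤ 1, where ρ denotes spectral radius. Then the set of infinite admissible sequences (one-sided infinite walks) in H is finite. -/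
/-!
If a vertex `v` had two distinct successors, strong connectivity would yield two different closed
walks at `v` of a common length `L`, so `(N ^ L) v v ≥ 2` and hence `(N ^ (L * m)) v v ≥ 2 ^ m`.
By Gelfand's formula this forces `ρ(N) ^ L ≥ 2`, contradicting `ρ(N) ≤ 1`. So every vertex has at
most one successor, and an admissible sequence is determined by its first vertex.
-/

open Filter Relation
open scoped NNReal ENNReal

section SpectralRadius

variable {A : Type*} [NormedRing A] [NormedAlgebra ℂ A] [CompleteSpace A]

theorem spectralRadius_pow [Nontrivial A] (a : A) (n : ℕ) :
    spectralRadius ℂ (a ^ n) = spectralRadius ℂ a ^ n := by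
  refine le_antisymm ?_ (spectrum.spectralRadius_pow_le' a n)
  rw [spectralRadius, spectrum.map_pow]
  refine iSup₂_le ?_
  rintro _ ⟨z, hz, rfl⟩
  rw [nnnorm_pow, ENNReal.coe_pow]
  exact pow_le_pow_left₀ zero_le (le_iSup₂ (f := fun k (_ : k ∈ spectrum ℂ a) =>
    (‖k‖₊ : ℝ≥0∞)) z hz) n

theorem le_spectralRadius_of_pow_le_nnnorm_pow {a : A} {c : ℝ≥0}
    (h : ∀ n, c ^ n ≤ ‖a ^ n‖₊) : (c : ℝ≥0∞) ≤ spectralRadius ℂ a := by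
  refine ge_of_tendsto (spectrum.pow_nnnorm_pow_one_div_tendsto_nhds_spectralRadius a) ?_
  filter_upwards [eventually_ne_atTop 0] with n hn
  calc (c : ℝ≥0∞) = ((c : ℝ≥0∞) ^ n) ^ (1 / n : ℝ) := by
        rw [one_div, ENNReal.pow_rpow_inv_natCast hn]
    _ ≤ (‖a ^ n‖₊ : ℝ≥0∞) ^ (1 / n : ℝ) := by gcongr; exact_mod_cast h n

end SpectralRadius

namespace Matrix

theorem apply_mul_apply_le_mul_apply {l m n : Type*} [Fintype m] (M : Matrix l m ℕ)
    (M' : Matrix m n ℕ) (x : l) (y : m) (z : n) : M x y * M' y z ≤ (M * M') x z :=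
  Finset.single_le_sum (f := fun j => M x j * M' j z) (fun _ _ => Nat.zero_le _)
    (Finset.mem_univ y)

variable {ι : Type*} [Fintype ι] [DecidableEq ι] (N : Matrix ι ι ℕ)

theorem pow_apply_mul_pow_apply_le_pow_add_apply (a b : ℕ) (x y z : ι) :
    (N ^ a) x y * (N ^ b) y z ≤ (N ^ (a + b)) x z :=
  pow_add N a b ▸ apply_mul_apply_le_mul_apply _ _ x y z

theorem exists_pow_apply_pos_of_reflTransGen {v w : ι}
    (h : ReflTransGen (fun a b => 0 < N a b) v w) : ∃ n, 0 < (N ^ n) v w := by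
  induction h with
  | refl => exact ⟨0, by simp⟩
  | @tail b c _ hbc ih =>
    obtain ⟨n, hn⟩ := ih
    exact ⟨n + 1, (Nat.mul_pos hn hbc).trans_le <| by
      simpa using pow_apply_mul_pow_apply_le_pow_add_apply N n 1 v b c⟩

theorem pow_le_pow_mul_apply_self {v : ι} {c L : ℕ} (h : c ≤ (N ^ L) v v) (m : ℕ) :
    c ^ m ≤ (N ^ (L * m)) v v := by
  induction m with
  | zero => simp
  | succ m ih =>
    calc c ^ (m + 1) = c ^ m * c := pow_succ c m
      _ ≤ (N ^ (L * m)) v v * (N ^ L) v v := Nat.mul_le_mul ih h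
      _ ≤ (N ^ (L * (m + 1))) v v := pow_apply_mul_pow_apply_le_pow_add_apply N _ _ v v v

theorem exists_two_le_pow_apply_self {v w₁ w₂ : ι} (hne : w₁ ≠ w₂)
    (h₁ : 0 < N v w₁) (h₂ : 0 < N v w₂)
    (hr₁ : ReflTransGen (fun a b => 0 < N a b) w₁ v)
    (hr₂ : ReflTransGen (fun a b => 0 < N a b) w₂ v) :
    ∃ L, 2 ≤ (N ^ L) v v := by
  obtain ⟨n₁, hn₁⟩ := N.exists_pow_apply_pos_of_reflTransGen hr₁
  obtain ⟨n₂, hn₂⟩ := N.exists_pow_apply_pos_of_reflTransGen hr₂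
  have closed {w n} (hw : 0 < N v w) (hn : 0 < (N ^ n) w v) : 0 < (N ^ (1 + n)) v v :=
    (Nat.mul_pos (by simpa using hw) hn).trans_le <|
      N.pow_apply_mul_pow_apply_le_pow_add_apply 1 n v w v
  -- Walk back from `wᵢ` to `v`, then pad with the loop at `v` through the other `wⱼ`.
  set P := n₁ + (1 + n₂)
  have e₁ : 0 < (N ^ P) w₁ v := (Nat.mul_pos hn₁ (closed h₂ hn₂)).trans_le <|
    N.pow_apply_mul_pow_apply_le_pow_add_apply _ _ w₁ v v
  have hP : n₂ + (1 + n₁) = P := by omega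
  have e₂ : 0 < (N ^ P) w₂ v := (Nat.mul_pos hn₂ (closed h₁ hn₁)).trans_le <|
    hP ▸ N.pow_apply_mul_pow_apply_le_pow_add_apply _ _ w₂ v v
  refine ⟨1 + P, ?_⟩
  rw [pow_add, pow_one, mul_apply]
  calc 2 ≤ N v w₁ * (N ^ P) w₁ v + N v w₂ * (N ^ P) w₂ v :=
        Nat.add_le_add (Nat.mul_pos h₁ e₁) (Nat.mul_pos h₂ e₂)
    _ = ∑ x ∈ {w₁, w₂}, N v x * (N ^ P) x v :=
        (Finset.sum_pair (f := fun x => N v x * (N ^ P) x v) hne).symm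
    _ ≤ ∑ x, N v x * (N ^ P) x v := Finset.sum_le_sum_of_subset (Finset.subset_univ _)

section LinftyOpNorm

-- The spectrum does not depend on the norm; the ℓ∞ operator norm just bounds entries easily.
attribute [local instance] Matrix.linftyOpNormedRing Matrix.linftyOpNormedAlgebra

theorem nnnorm_apply_le_linfty_opNNNorm (M : Matrix ι ι ℂ) (i j : ι) : ‖M i j‖₊ ≤ ‖M‖₊ := by
  rw [linfty_opNNNorm_def]
  exact (Finset.single_le_sum (fun _ _ => zero_le) (Finset.mem_univ j)).trans
    (Finset.le_sup (f := fun i => ∑ j, ‖M i j‖₊) (Finset.mem_univ i))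

theorem le_spectralRadius_of_pow_le_nnnorm_pow_apply {M : Matrix ι ι ℂ} {c : ℝ≥0} (v : ι)
    (h : ∀ n, c ^ n ≤ ‖(M ^ n) v v‖₊) : (c : ℝ≥0∞) ≤ spectralRadius ℂ M :=
  le_spectralRadius_of_pow_le_nnnorm_pow fun n =>
    (h n).trans (nnnorm_apply_le_linfty_opNNNorm _ v v)

theorem natCast_le_spectralRadius_pow {v : ι} {c L : ℕ} (h : c ≤ (N ^ L) v v) :
    (c : ℝ≥0∞) ≤ spectralRadius ℂ (N.map (Nat.cast : ℕ → ℂ)) ^ L := by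
  have : Nonempty ι := ⟨v⟩
  rw [← spectralRadius_pow]
  have hpow : ∀ n, (N.map (Nat.cast : ℕ → ℂ)) ^ n = (N ^ n).map Nat.cast := fun n =>
    (N.map_pow (Nat.castRingHom ℂ) n).symm
  have := le_spectralRadius_of_pow_le_nnnorm_pow_apply (c := c) v fun m => by
    rw [← pow_mul, hpow, map_apply, RCLike.nnnorm_natCast]
    exact_mod_cast N.pow_le_pow_mul_apply_self h m
  exact_mod_cast this

end LinftyOpNorm

end Matrix

theorem Relator.RightUnique.finite_setOf_forall_rel_succ {α : Type*} [Finite α]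
    {R : α → α → Prop} (hR : Relator.RightUnique R) :
    {f : ℕ → α | ∀ m, R (f m) (f (m + 1))}.Finite := by
  refine Set.Finite.of_finite_image (f := fun f => f 0) (Set.toFinite _)
    fun f hf g hg h0 => funext fun m => ?_
  induction m with
  | zero => exact h0
  | succ m ih => exact hR (hf m) (ih ▸ hg m)

/-- If a finite strongly connected directed graph (with adjacency matrix `N` counting edges)
has spectral radius `ρ(N) ≤ 1`, then the set of one-sided infinite admissible sequences
(infinite walks) in the graph is finite. -/
theorem finite_admissible_sequences_of_spectralRadius_le_one
    (k : ℕ) (N : Matrix (Fin k) (Fin k) ℕ)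
    (hconn : ∀ v w : Fin k, Relation.ReflTransGen (fun a b : Fin k => 0 < N a b) v w)
    (hρ : spectralRadius ℂ (N.map (Nat.cast : ℕ → ℂ)) ≤ 1) :
    {f : ℕ → Fin k | ∀ m : ℕ, 0 < N (f m) (f (m + 1))}.Finite := by
  have hunique : Relator.RightUnique fun a b : Fin k => 0 < N a b := by
    intro v w₁ w₂ h₁ h₂
    by_contra hne
    obtain ⟨L, hL⟩ := N.exists_two_le_pow_apply_self hne h₁ h₂ (hconn w₁ v) (hconn w₂ v)
    have h2 : (2 : ℝ≥0∞) ≤ 1 :=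
      (N.natCast_le_spectralRadius_pow hL).trans (pow_le_one₀ zero_le hρ)
    norm_num at h2
  exact hunique.finite_setOf_forall_rel_succ
end

section
/- Let G be a finite directed graph with adjacency matrix N and let X be the set of infinite admissible sequences in G, equipped with the metric d(u, v) = n^{-k} where k is the first index at which u and v differ (for a fixed integer n ≥ 2). If every strongly connected component H of G has spectral radius ρ(H) ≤ 1, then X is countable. -/
/-!
Inside a strongly connected component of spectral radius at most `1`, no vertex `u` has two
distinct successors: the two closed walks through `u` starting along different edges combine
into at least `2 ^ m` closed walks of length `L * m` for some `L > 0`, so Gelfand's formula and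
spectral mapping give `ρ ^ L ≥ 2`. Along an admissible sequence the sets of vertices reachable
from `f m` decrease in `m`, hence stabilise; from then on the sequence stays inside one
component, where it is determined by its current vertex. So every admissible sequence is
determined by a finite prefix.
-/

open Filter Topology
open scoped NNReal ENNReal

namespace spectrum

lemma spectralRadius_pow_le_pow {𝕜 A : Type*} [NormedField 𝕜] [IsAlgClosed 𝕜] [Ring A]
    [Algebra 𝕜 A] (a : A) {n : ℕ} (hn : 0 < n) :
    spectralRadius 𝕜 (a ^ n) ≤ spectralRadius 𝕜 a ^ n := by
  refine iSup₂_le fun k hk => ?_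
  rw [map_pow_of_pos a hn] at hk
  obtain ⟨x, hx, rfl⟩ := hk
  rw [nnnorm_pow, ENNReal.coe_pow]
  exact pow_le_pow_left₀ zero_le
    (le_iSup₂ (f := fun x (_ : x ∈ spectrum 𝕜 a) => (‖x‖₊ : ℝ≥0∞)) x hx) n

lemma le_spectralRadius_of_forall_pow_le_nnnorm_pow {A : Type*} [NormedRing A]
    [NormedAlgebra ℂ A] [CompleteSpace A] (a : A) {c : ℝ≥0}
    (h : ∀ n : ℕ, c ^ n ≤ ‖a ^ n‖₊) : (c : ℝ≥0∞) ≤ spectralRadius ℂ a := by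
  refine ge_of_tendsto (pow_nnnorm_pow_one_div_tendsto_nhds_spectralRadius a) ?_
  filter_upwards [eventually_ne_atTop 0] with n hn
  calc (c : ℝ≥0∞) = ((c : ℝ≥0∞) ^ n) ^ (1 / n : ℝ) := by
        rw [one_div, ENNReal.pow_rpow_inv_natCast hn]
    _ ≤ (‖a ^ n‖₊ : ℝ≥0∞) ^ (1 / n : ℝ) := by
        gcongr
        exact_mod_cast h n

end spectrum

namespace Matrix

section WalkCounts

variable {n : Type*} [Fintype n] [DecidableEq n]

lemma pow_apply_mul_pow_apply_le (M : Matrix n n ℕ) (a b : ℕ) (x y z : n) :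
    (M ^ a) x y * (M ^ b) y z ≤ (M ^ (a + b)) x z := by
  rw [pow_add, mul_apply]
  exact Finset.single_le_sum (f := fun i => (M ^ a) x i * (M ^ b) i z)
    (fun _ _ => Nat.zero_le _) (Finset.mem_univ y)

lemma pow_add_apply_pos {M : Matrix n n ℕ} {a b : ℕ} {x y z : n}
    (hxy : 0 < (M ^ a) x y) (hyz : 0 < (M ^ b) y z) : 0 < (M ^ (a + b)) x z :=
  (Nat.mul_pos hxy hyz).trans_le (pow_apply_mul_pow_apply_le M a b x y z)

lemma apply_self_pow_le_pow_apply (M : Matrix n n ℕ) (x : n) (m : ℕ) :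
    M x x ^ m ≤ (M ^ m) x x := by
  induction m with
  | zero => simp
  | succ m ih =>
    calc M x x ^ (m + 1) = M x x ^ m * (M ^ 1) x x := by rw [pow_succ, pow_one]
      _ ≤ (M ^ m) x x * (M ^ 1) x x := Nat.mul_le_mul_right _ ih
      _ ≤ (M ^ (m + 1)) x x := pow_apply_mul_pow_apply_le M m 1 x x x

lemma exists_pow_apply_pos_of_reflTransGen_s8 {M : Matrix n n ℕ} {x y : n}
    (h : Relation.ReflTransGen (fun a b => 0 < M a b) x y) : ∃ m, 0 < (M ^ m) x y := by
  induction h with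
  | refl => exact ⟨0, by simp⟩
  | tail _ hyz ih =>
    obtain ⟨m, hm⟩ := ih
    exact ⟨m + 1, pow_add_apply_pos hm (by rwa [pow_one])⟩

lemma two_le_pow_apply_self {M : Matrix n n ℕ} {u w w' : n} {a b : ℕ}
    (hw : 0 < M u w) (hw' : 0 < M u w') (hne : w ≠ w')
    (hwu : 0 < (M ^ a) w u) (hw'u : 0 < (M ^ b) w' u) : 2 ≤ (M ^ (a + b + 2)) u u := by
  have hw₁ : 0 < (M ^ 1) u w := by rwa [pow_one]
  have hw'₁ : 0 < (M ^ 1) u w' := by rwa [pow_one]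
  have hwalk : 0 < (M ^ (a + b + 1)) w u := by
    simpa only [add_comm 1 b, add_assoc] using pow_add_apply_pos hwu (pow_add_apply_pos hw'₁ hw'u)
  have hwalk' : 0 < (M ^ (a + b + 1)) w' u := by
    simpa only [add_comm 1 a, add_comm b, add_assoc] using
      pow_add_apply_pos hw'u (pow_add_apply_pos hw₁ hwu)
  calc 2 ≤ M u w * (M ^ (a + b + 1)) w u + M u w' * (M ^ (a + b + 1)) w' u := by
        have := Nat.mul_pos hw hwalk
        have := Nat.mul_pos hw' hwalk'
        omega
    _ = ∑ y ∈ {w, w'}, M u y * (M ^ (a + b + 1)) y u :=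
        (Finset.sum_pair (f := fun y => M u y * (M ^ (a + b + 1)) y u) hne).symm
    _ ≤ ∑ y, M u y * (M ^ (a + b + 1)) y u := Finset.sum_le_sum_of_subset (Finset.subset_univ _)
    _ = (M ^ (a + b + 2)) u u := by rw [pow_succ' M (a + b + 1), mul_apply]

end WalkCounts

section linfty

attribute [local instance] Matrix.linftyOpSeminormedAddCommGroup Matrix.linftyOpNormedRing
  Matrix.linftyOpNormedAlgebra

lemma nnnorm_apply_le_linfty_opNNNorm_s8 {m n α : Type*} [Fintype m] [Fintype n]
    [SeminormedAddCommGroup α] (A : Matrix m n α) (x : m) (y : n) : ‖A x y‖₊ ≤ ‖A‖₊ := by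
  rw [linfty_opNNNorm_def]
  exact (Finset.single_le_sum (f := fun j => ‖A x j‖₊) (fun _ _ => zero_le)
    (Finset.mem_univ y)).trans (Finset.le_sup (f := fun i => ∑ j, ‖A i j‖₊) (Finset.mem_univ x))

lemma one_lt_spectralRadius_of_two_le_pow_apply_self {n : Type*} [Fintype n] [DecidableEq n]
    (M : Matrix n n ℕ) {L : ℕ} (hL : 0 < L) {u : n} (h : 2 ≤ (M ^ L) u u) : 1 < spectralRadius ℂ (M.map (Nat.cast : ℕ → ℂ)) := by
  set a := (Nat.castRingHom ℂ).mapMatrix M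
  have hgrowth : ∀ m : ℕ, (2 : ℝ≥0) ^ m ≤ ‖(a ^ L) ^ m‖₊ := by
    intro m
    have hentry : ((a ^ L) ^ m) u u = (((M ^ L) ^ m) u u : ℂ) := by
      rw [← map_pow, ← map_pow]
      rfl
    calc (2 : ℝ≥0) ^ m ≤ (((M ^ L) ^ m) u u : ℝ≥0) := by
          exact_mod_cast (Nat.pow_le_pow_left h m).trans (apply_self_pow_le_pow_apply _ u m)
      _ = ‖((a ^ L) ^ m) u u‖₊ := by rw [hentry, RCLike.nnnorm_natCast]
      _ ≤ ‖(a ^ L) ^ m‖₊ := nnnorm_apply_le_linfty_opNNNorm_s8 _ u u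
  have h2 : (2 : ℝ≥0∞) ≤ spectralRadius ℂ a ^ L :=
    (spectrum.le_spectralRadius_of_forall_pow_le_nnnorm_pow _ hgrowth).trans
      (spectrum.spectralRadius_pow_le_pow a hL)
  by_contra! hle
  have : (2 : ℝ≥0∞) ≤ 1 := h2.trans (pow_le_one₀ zero_le hle)
  norm_num at this

end linfty

section Components

variable {n : Type*} (N : Matrix n n ℕ)

def Reaches (u v : n) : Prop := Relation.ReflTransGen (fun a b => 0 < N a b) u v

def component (v : n) : Set n := {u | N.Reaches v u ∧ N.Reaches u v}

open Classical in
noncomputable def componentMatrix (v : n) : Matrix n n ℕ :=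
  of fun a b => if a ∈ N.component v ∧ b ∈ N.component v then N a b else 0

def admissible : Set (ℕ → n) := {f | ∀ m, 0 < N (f m) (f (m + 1))}

/-- From time `m₀` on, `f` stays in the strongly connected component of `f m₀`. -/
def settledAt (m₀ : ℕ) : Set (ℕ → n) :=
  {f | f ∈ N.admissible ∧ ∀ m, m₀ ≤ m → N.Reaches (f m) (f m₀)}

lemma map_cast_componentMatrix (v : n) :
    (N.componentMatrix v).map (Nat.cast : ℕ → ℂ) = of fun a b =>
      Set.indicator {q : n × n | q.1 ∈ N.component v ∧ q.2 ∈ N.component v}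
        (fun q => (N q.1 q.2 : ℂ)) (a, b) := by
  classical
  ext a b
  simp only [componentMatrix, map_apply, of_apply]
  rw [Set.indicator_apply]
  split_ifs <;> simp_all

variable {N}

lemma componentMatrix_pos {v u w : n} (hu : u ∈ N.component v) (hw : w ∈ N.component v)
    (h : 0 < N u w) : 0 < N.componentMatrix v u w := by
  simpa [componentMatrix, hu, hw] using h

lemma reflTransGen_componentMatrix {v w u : n} (hw : w ∈ N.component v)
    (hu : u ∈ N.component v) :
    Relation.ReflTransGen (fun a b => 0 < N.componentMatrix v a b) w u := by
  have hwu : N.Reaches w u := hw.2.trans hu.1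
  induction hwu with
  | refl => exact .refl
  | @tail x u hwx hxu ih =>
    have hx : x ∈ N.component v := ⟨hw.1.trans hwx, .head hxu hu.2⟩
    exact (ih hx).tail (componentMatrix_pos hx hu hxu)

lemma reaches_of_le {f : ℕ → n} (hf : f ∈ N.admissible) {i j : ℕ} (hij : i ≤ j) :
    N.Reaches (f i) (f j) := by
  induction j, hij using Nat.le_induction with
  | base => exact .refl
  | succ j _ ih => exact ih.tail (hf j)

lemma mem_component_of_mem_settledAt {f : ℕ → n} {m₀ m : ℕ} (hf : f ∈ N.settledAt m₀)
    (hm : m₀ ≤ m) : f m ∈ N.component (f m₀) :=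
  ⟨reaches_of_le hf.1 hm, hf.2 m hm⟩

lemma admissible_subset_iUnion_settledAt [Finite n] :
    N.admissible ⊆ ⋃ m₀, N.settledAt m₀ := by
  intro f hf
  have hanti : Antitone fun m => {u | N.Reaches (f m) u} :=
    antitone_nat_of_succ_le fun m _ hu => (reaches_of_le hf m.le_succ).trans hu
  obtain ⟨m₀, hm₀⟩ := WellFoundedLT.antitone_chain_condition hanti
  refine Set.mem_iUnion.2 ⟨m₀, hf, fun m hm => ?_⟩
  have hmem : f m₀ ∈ {u | N.Reaches (f m) u} := hm₀ m hm ▸ .refl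
  exact hmem

variable [Fintype n] [DecidableEq n]

lemma eq_of_pos_of_mem_component {v u w w' : n}
    (hρ : spectralRadius ℂ ((N.componentMatrix v).map (Nat.cast : ℕ → ℂ)) ≤ 1)
    (hu : u ∈ N.component v) (hw : w ∈ N.component v) (hw' : w' ∈ N.component v)
    (h : 0 < N u w) (h' : 0 < N u w') : w = w' := by
  by_contra hne
  obtain ⟨a, ha⟩ := exists_pow_apply_pos_of_reflTransGen_s8 (reflTransGen_componentMatrix hw hu)
  obtain ⟨b, hb⟩ := exists_pow_apply_pos_of_reflTransGen_s8 (reflTransGen_componentMatrix hw' hu)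
  have h2 := two_le_pow_apply_self (componentMatrix_pos hu hw h) (componentMatrix_pos hu hw' h')
    hne ha hb
  exact (one_lt_spectralRadius_of_two_le_pow_apply_self _ (by omega) h2).not_ge hρ

lemma eq_of_mem_settledAt
    (hρ : ∀ v, spectralRadius ℂ ((N.componentMatrix v).map (Nat.cast : ℕ → ℂ)) ≤ 1)
    {f g : ℕ → n} {m₀ : ℕ} (hf : f ∈ N.settledAt m₀) (hg : g ∈ N.settledAt m₀)
    (h₀ : f m₀ = g m₀) {m : ℕ} (hm : m₀ ≤ m) : f m = g m := by
  induction m, hm using Nat.le_induction with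
  | base => exact h₀
  | succ m hm ih =>
    have hg_mem : g (m + 1) ∈ N.component (f m₀) :=
      h₀ ▸ mem_component_of_mem_settledAt hg (by omega)
    exact eq_of_pos_of_mem_component (hρ _) (mem_component_of_mem_settledAt hf hm)
      (mem_component_of_mem_settledAt hf (by omega)) hg_mem (hf.1 m) (ih ▸ hg.1 m)

lemma countable_settledAt
    (hρ : ∀ v, spectralRadius ℂ ((N.componentMatrix v).map (Nat.cast : ℕ → ℂ)) ≤ 1)
    (m₀ : ℕ) : (N.settledAt m₀).Countable := by
  refine (Set.mapsTo_univ (fun f (i : Fin (m₀ + 1)) => f i) _).countable_of_injOn ?_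
    Set.countable_univ
  intro f hf g hg hfg
  funext m
  rcases le_or_gt m m₀ with hm | hm
  · exact congrFun hfg ⟨m, by omega⟩
  · exact eq_of_mem_settledAt hρ hf hg (congrFun hfg (Fin.last m₀)) hm.le

end Components

end Matrix

/-- Let `G` be a finite directed graph with adjacency matrix `N`, and let `X` be the set of
infinite admissible sequences in `G`. If every strongly connected component of `G` has
spectral radius at most `1` (for the adjacency matrix restricted to the component, extended
by zero), then `X` is countable. -/
theorem countable_admissible_sequences_of_components_spectralRadius_le_one
    (k : ℕ) (N : Matrix (Fin k) (Fin k) ℕ)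
    (R : Fin k → Fin k → Prop)
    (hR : R = fun a b => Relation.ReflTransGen (fun u v : Fin k => 0 < N u v) a b)
    (hcomp : ∀ v : Fin k,
      spectralRadius ℂ
        (Matrix.of fun a b : Fin k =>
          Set.indicator {q : Fin k × Fin k | (R v q.1 ∧ R q.1 v) ∧ (R v q.2 ∧ R q.2 v)}
            (fun q : Fin k × Fin k => (N q.1 q.2 : ℂ)) (a, b)) ≤ 1) :
    {f : ℕ → Fin k | ∀ m : ℕ, 0 < N (f m) (f (m + 1))}.Countable := by
  subst hR
  have hρ : ∀ v, spectralRadius ℂ ((N.componentMatrix v).map (Nat.cast : ℕ → ℂ)) ≤ 1 := by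
    intro v
    rw [Matrix.map_cast_componentMatrix]
    exact hcomp v
  exact (Set.countable_iUnion (Matrix.countable_settledAt hρ)).mono
    Matrix.admissible_subset_iUnion_settledAt
end

section
/- Let C be the middle-third Cantor set and for x ∈ [−1,1] let S_x = {(b₁, b₂) ∈ C × C : −b₁ + b₂ = x}. Define η on ternary-digit pairs by the six-symbol coding of x (digits 0–5 representing the integer intervals I_0,…,I_5, with η(i) = 1 for i ∈ {0,1,4,5} and η(i) = 2 for i ∈ {2,3}). Then for x ∉ {q₁/3^{q₂} : q₁, q₂ ∈ ℤ} with coding i₀i₁i₂⋯, Card(S_x) = ∏_k η(i_k); in particular Card(S_x) is either a power of 2 or infinite. -/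
/-!
Write `b ∈ C` as `(a + e) / 3` with `a ∈ C` and a ternary digit `e ∈ {0, 2}`. A pair
`(b₁, b₂) ∈ S_t` then has first digits `(e, e')` and tails in `S_{3t - (e' - e)}`. If
`3t - d ∈ (-1, 1)` with `d ∈ {-2, 0, 2}`, then since tails have difference in `[-1, 1]` only the
digit pairs with `e' - e = d` occur: two of them for `d = 0` (the symbols `2, 3`), one for
`d = ±2`. So `|S_{y k}| = η(i k) |S_{y (k+1)}|`. Every fibre over `[-1, 1]` is nonempty
(`C - C = [-1, 1]`), and once only symbols with `η = 1` occur, each step contracts the fibre by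
`3`, so it is a single point.
-/

open Set

def diffFiber (C : Set ℝ) (t : ℝ) : Set (ℝ × ℝ) :=
  {p | p.1 ∈ C ∧ p.2 ∈ C ∧ -p.1 + p.2 = t}

def branchDigits (d : ℝ) : Set ℝ :=
  {e | (e = 0 ∨ e = 2) ∧ (e + d = 0 ∨ e + d = 2)}

/-- Sends `(e, q)` to the pair with first ternary digits `e`, `e + d` and tails `q`. -/
noncomputable def branchMap (d : ℝ) (z : ℝ × (ℝ × ℝ)) : ℝ × ℝ :=
  ((z.2.1 + z.1) / 3, (z.2.2 + z.1 + d) / 3)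

theorem branchDigits_zero : branchDigits 0 = {0, 2} := by
  ext e; simp [branchDigits]

theorem branchDigits_two : branchDigits 2 = {0} := by
  ext e
  simp only [branchDigits, mem_ofPred_eq, mem_singleton_iff]
  constructor
  · rintro ⟨rfl | rfl, h | h⟩ <;> norm_num at *
  · rintro rfl; norm_num

theorem branchDigits_neg_two : branchDigits (-2) = {2} := by
  ext e
  simp only [branchDigits, mem_ofPred_eq, mem_singleton_iff]
  constructor
  · rintro ⟨rfl | rfl, h | h⟩ <;> norm_num at *
  · rintro rfl; norm_num

theorem encard_branchDigits {d : ℝ} (hd : d = -2 ∨ d = 0 ∨ d = 2) :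
    (branchDigits d).encard = if d = 0 then 2 else 1 := by
  rcases hd with rfl | rfl | rfl
  · simp [branchDigits_neg_two]
  · simp [branchDigits_zero, encard_pair]
  · simp [branchDigits_two]

section SelfSimilar

variable {C : Set ℝ}

theorem subset_Icc_of_selfSimilar (hne : C.Nonempty) (hc : IsCompact C)
    (hself : C = (fun x : ℝ => x / 3) '' C ∪ (fun x : ℝ => (x + 2) / 3) '' C) :
    C ⊆ Icc 0 1 := by
  obtain ⟨M, hM, hMub⟩ := hc.exists_isGreatest hne
  obtain ⟨L, hL, hLlb⟩ := hc.exists_isLeast hne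
  have hM1 : M ≤ 1 := by
    rw [hself] at hM
    rcases hM with ⟨m, hm, rfl⟩ | ⟨m, hm, rfl⟩ <;> linarith [hMub hm]
  have hL0 : 0 ≤ L := by
    rw [hself] at hL
    rcases hL with ⟨m, hm, rfl⟩ | ⟨m, hm, rfl⟩ <;> linarith [hLlb hm]
  exact fun b hb => ⟨hL0.trans (hLlb hb), (hMub hb).trans hM1⟩

theorem exists_digit_of_mem_selfSimilar
    (hself : C = (fun x : ℝ => x / 3) '' C ∪ (fun x : ℝ => (x + 2) / 3) '' C)
    {b : ℝ} (hb : b ∈ C) : ∃ e, (e = 0 ∨ e = 2) ∧ ∃ a ∈ C, b = (a + e) / 3 := by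
  rw [hself] at hb
  rcases hb with ⟨a, ha, rfl⟩ | ⟨a, ha, rfl⟩
  · exact ⟨0, Or.inl rfl, a, ha, by rw [add_zero]⟩
  · exact ⟨2, Or.inr rfl, a, ha, rfl⟩

theorem add_div_three_mem_selfSimilar
    (hself : C = (fun x : ℝ => x / 3) '' C ∪ (fun x : ℝ => (x + 2) / 3) '' C)
    {a e : ℝ} (he : e = 0 ∨ e = 2) (ha : a ∈ C) : (a + e) / 3 ∈ C := by
  rw [hself]
  rcases he with rfl | rfl
  · exact Or.inl ⟨a, ha, by rw [add_zero]⟩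
  · exact Or.inr ⟨a, ha, rfl⟩

theorem branchMap_mem_diffFiber
    (hself : C = (fun x : ℝ => x / 3) '' C ∪ (fun x : ℝ => (x + 2) / 3) '' C)
    {d e s : ℝ} {q : ℝ × ℝ} (he : e ∈ branchDigits d) (hq : q ∈ diffFiber C s) :
    branchMap d (e, q) ∈ diffFiber C ((s + d) / 3) := by
  obtain ⟨he₁, he₂⟩ := he
  obtain ⟨hq₁, hq₂, hqs⟩ := hq
  refine ⟨add_div_three_mem_selfSimilar hself he₁ hq₁, ?_, ?_⟩
  · simpa only [branchMap, add_assoc] using add_div_three_mem_selfSimilar hself he₂ hq₂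
  · simp only [branchMap]
    linarith

theorem diffFiber_eq_image (h01 : C ⊆ Icc 0 1)
    (hself : C = (fun x : ℝ => x / 3) '' C ∪ (fun x : ℝ => (x + 2) / 3) '' C)
    {d t : ℝ} (hd : d = -2 ∨ d = 0 ∨ d = 2) (ht : 3 * t - d ∈ Ioo (-1) 1) :
    diffFiber C t = branchMap d '' (branchDigits d ×ˢ diffFiber C (3 * t - d)) := by
  apply Subset.antisymm
  · rintro ⟨b₁, b₂⟩ ⟨hb₁, hb₂, hbt⟩
    obtain ⟨e, he, a₁, ha₁, rfl⟩ := exists_digit_of_mem_selfSimilar hself hb₁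
    obtain ⟨e', he', a₂, ha₂, rfl⟩ := exists_digit_of_mem_selfSimilar hself hb₂
    obtain ⟨⟨h₁, h₁'⟩, ⟨h₂, h₂'⟩⟩ := And.intro (h01 ha₁) (h01 ha₂)
    -- the tails differ by at most `1` and `|3t - d| < 1`, so the digits must differ by `d`
    have hee' : e' = e + d := by
      rcases he with rfl | rfl <;> rcases he' with rfl | rfl <;>
        rcases hd with rfl | rfl | rfl <;> linarith [ht.1, ht.2]
    refine ⟨(e, (a₁, a₂)), ⟨⟨he, hee' ▸ he'⟩, ha₁, ha₂, ?_⟩, ?_⟩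
    · dsimp only at hbt ⊢
      linarith
    · simp only [branchMap, hee', add_assoc]
  · rintro _ ⟨⟨e, q⟩, ⟨he, hq⟩, rfl⟩
    simpa using branchMap_mem_diffFiber hself he hq

theorem branchMap_injOn (h01 : C ⊆ Icc 0 1) (d s : ℝ) :
    InjOn (branchMap d) (branchDigits d ×ˢ diffFiber C s) := by
  rintro ⟨e, q⟩ ⟨he, hq⟩ ⟨e', q'⟩ ⟨he', hq'⟩ h
  simp only [branchMap, Prod.mk.injEq] at h
  obtain ⟨h₁, h₂⟩ := h
  obtain ⟨⟨hq₀, hq₁⟩, ⟨hq₀', hq₁'⟩⟩ := And.intro (h01 hq.1) (h01 hq'.1)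
  obtain rfl : e = e' := by
    rcases he.1 with rfl | rfl <;> rcases he'.1 with rfl | rfl <;> linarith
  ext <;> dsimp only <;> linarith

theorem encard_diffFiber_eq_mul (h01 : C ⊆ Icc 0 1)
    (hself : C = (fun x : ℝ => x / 3) '' C ∪ (fun x : ℝ => (x + 2) / 3) '' C)
    {d t : ℝ} (hd : d = -2 ∨ d = 0 ∨ d = 2) (ht : 3 * t - d ∈ Ioo (-1) 1) :
    (diffFiber C t).encard = (branchDigits d).encard * (diffFiber C (3 * t - d)).encard := by
  rw [diffFiber_eq_image h01 hself hd ht, (branchMap_injOn h01 d _).encard_image, encard_prod]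

theorem exists_fst_sub_eq_div_three (h01 : C ⊆ Icc 0 1)
    (hself : C = (fun x : ℝ => x / 3) '' C ∪ (fun x : ℝ => (x + 2) / 3) '' C)
    {d t : ℝ} (hd : d = -2 ∨ d = 2) (ht : 3 * t - d ∈ Ioo (-1) 1) {p p' : ℝ × ℝ}
    (hp : p ∈ diffFiber C t) (hp' : p' ∈ diffFiber C t) :
    ∃ q ∈ diffFiber C (3 * t - d), ∃ q' ∈ diffFiber C (3 * t - d), p.1 - p'.1 = (q.1 - q'.1) / 3 := by
  rw [diffFiber_eq_image h01 hself (hd.imp_right Or.inr) ht] at hp hp'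
  obtain ⟨⟨e, q⟩, ⟨he, hq⟩, rfl⟩ := hp
  obtain ⟨⟨e', q'⟩, ⟨he', hq'⟩, rfl⟩ := hp'
  obtain rfl : e = e' := by
    rcases hd with rfl | rfl
    · rw [branchDigits_neg_two, mem_singleton_iff] at he he'; exact he.trans he'.symm
    · rw [branchDigits_two, mem_singleton_iff] at he he'; exact he.trans he'.symm
  exact ⟨q, hq, q', hq', by simp only [branchMap]; ring⟩

theorem diffFiber_nonempty (hne : C.Nonempty) (hc : IsCompact C)
    (hself : C = (fun x : ℝ => x / 3) '' C ∪ (fun x : ℝ => (x + 2) / 3) '' C)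
    {t : ℝ} (ht : t ∈ Icc (-1) 1) : (diffFiber C t).Nonempty := by
  have h01 := subset_Icc_of_selfSimilar hne hc hself
  have approx : ∀ n : ℕ, ∀ t ∈ Icc (-1 : ℝ) 1,
      ∃ s, (diffFiber C s).Nonempty ∧ |t - s| ≤ (1 / 3) ^ n := by
    intro n
    induction n with
    | zero =>
      intro t ht
      obtain ⟨c, hc⟩ := hne
      exact ⟨0, ⟨(c, c), hc, hc, by ring⟩, by simpa [abs_le] using ht⟩
    | succ n ih =>
      intro t ht
      obtain ⟨d, e, he, hdt⟩ : ∃ d e, e ∈ branchDigits d ∧ 3 * t - d ∈ Icc (-1 : ℝ) 1 := by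
        obtain ⟨ht₀, ht₁⟩ := ht
        by_cases h₁ : t ≤ -1 / 3
        · exact ⟨-2, 2, by simp [branchDigits_neg_two], by constructor <;> linarith⟩
        by_cases h₂ : t ≤ 1 / 3
        · exact ⟨0, 0, by simp [branchDigits_zero], by constructor <;> linarith⟩
        · exact ⟨2, 0, by simp [branchDigits_two], by constructor <;> linarith⟩
      obtain ⟨s, ⟨q, hq⟩, hs⟩ := ih _ hdt
      refine ⟨(s + d) / 3, ⟨_, branchMap_mem_diffFiber hself he hq⟩, ?_⟩
      calc |t - (s + d) / 3| = |3 * t - d - s| / 3 := by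
            rw [show t - (s + d) / 3 = (3 * t - d - s) / 3 by ring, abs_div,
              abs_of_pos (by norm_num : (0 : ℝ) < 3)]
        _ ≤ (1 / 3) ^ n / 3 := by gcongr
        _ = (1 / 3) ^ (n + 1) := by ring
  have hclosed : IsClosed ((fun p : ℝ × ℝ => -p.1 + p.2) '' (C ×ˢ C)) :=
    ((hc.prod hc).image (by fun_prop)).isClosed
  have hclosure : t ∈ closure ((fun p : ℝ × ℝ => -p.1 + p.2) '' (C ×ˢ C)) := by
    rw [Metric.mem_closure_iff]
    intro ε hε
    obtain ⟨n, hn⟩ := exists_pow_lt_of_lt_one hε (by norm_num : (1 / 3 : ℝ) < 1)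
    obtain ⟨s, ⟨p, hp₁, hp₂, rfl⟩, hs⟩ := approx n t ht
    exact ⟨_, ⟨p, ⟨hp₁, hp₂⟩, rfl⟩, (Real.dist_eq t _ ▸ hs).trans_lt hn⟩
  obtain ⟨p, ⟨hp₁, hp₂⟩, hpt⟩ := hclosed.closure_eq ▸ hclosure
  exact ⟨p, hp₁, hp₂, hpt⟩

end SelfSimilar

section Orbit

variable {C : Set ℝ} {w d : ℕ → ℝ}

theorem encard_diffFiber_orbit (h01 : C ⊆ Icc 0 1)
    (hself : C = (fun x : ℝ => x / 3) '' C ∪ (fun x : ℝ => (x + 2) / 3) '' C)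
    (hd : ∀ k, d k = -2 ∨ d k = 0 ∨ d k = 2) (hw : ∀ k, w k ∈ Ioo (-1) 1)
    (hrec : ∀ k, w (k + 1) = 3 * w k - d k) (n : ℕ) :
    (diffFiber C (w 0)).encard =
      2 ^ Nat.count (fun k => d k = 0) n * (diffFiber C (w n)).encard := by
  induction n with
  | zero => simp
  | succ n ih =>
    rw [ih, encard_diffFiber_eq_mul h01 hself (hd n) (hrec n ▸ hw (n + 1)), ← hrec n,
      encard_branchDigits (hd n), Nat.count_succ, pow_add, mul_assoc]
    split_ifs <;> simp

theorem diffFiber_orbit_subsingleton (h01 : C ⊆ Icc 0 1)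
    (hself : C = (fun x : ℝ => x / 3) '' C ∪ (fun x : ℝ => (x + 2) / 3) '' C) {n : ℕ}
    (hd : ∀ k ≥ n, d k = -2 ∨ d k = 2) (hw : ∀ k, w k ∈ Ioo (-1) 1)
    (hrec : ∀ k, w (k + 1) = 3 * w k - d k) : (diffFiber C (w n)).Subsingleton := by
  have contract : ∀ M : ℕ, ∀ k ≥ n, ∀ p ∈ diffFiber C (w k), ∀ p' ∈ diffFiber C (w k),
      |p.1 - p'.1| ≤ (1 / 3) ^ M := by
    intro M
    induction M with
    | zero =>
      intro k _ p hp p' hp'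
      obtain ⟨⟨h₀, h₁⟩, ⟨h₀', h₁'⟩⟩ := And.intro (h01 hp.1) (h01 hp'.1)
      rw [pow_zero, abs_le]
      constructor <;> linarith
    | succ M ih =>
      intro k hk p hp p' hp'
      obtain ⟨q, hq, q', hq', hpq⟩ :=
        exists_fst_sub_eq_div_three h01 hself (hd k hk) (hrec k ▸ hw (k + 1)) hp hp'
      rw [← hrec k] at hq hq'
      rw [hpq, abs_div, abs_of_pos (by norm_num : (0 : ℝ) < 3), pow_succ]
      linarith [ih (k + 1) (by omega) q hq q' hq']
  intro p hp p' hp'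
  have h₁ : p.1 = p'.1 := eq_of_forall_dist_le fun ε hε => by
    obtain ⟨M, hM⟩ := exists_pow_lt_of_lt_one hε (by norm_num : (1 / 3 : ℝ) < 1)
    exact (contract M n le_rfl p hp p' hp').trans hM.le
  exact Prod.ext h₁ (by linarith [hp.2.2, hp'.2.2])

end Orbit

theorem Nat.exists_count_eq_of_encard_eq {p : ℕ → Prop} [DecidablePred p] {u : ℕ}
    (hu : {k | p k}.encard = u) : ∃ n, Nat.count p n = u ∧ ∀ k ≥ n, ¬p k := by
  obtain ⟨N, hN⟩ := (finite_of_encard_eq_coe hu).bddAbove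
  refine ⟨N + 1, ?_, fun k hk hpk => absurd (hN hpk) (by omega)⟩
  have hfilter : (({k ∈ Finset.range (N + 1) | p k} : Finset ℕ) : Set ℕ) = {k | p k} := by
    ext k
    simpa using fun hk => Nat.lt_succ_of_le (hN hk)
  rw [Nat.count_eq_card_filter_range, ← Nat.cast_inj (R := ℕ∞), ← encard_coe_eq_coe_finsetCard,
    hfilter, hu]

/-- Symbol `j` of the coding acts by `y ↦ 3y - codingShift j`. -/
def codingShift (j : Fin 6) : ℝ := ![-2, -2, 0, 0, 2, 2] j

theorem codingShift_mem (j : Fin 6) :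
    codingShift j = -2 ∨ codingShift j = 0 ∨ codingShift j = 2 := by
  fin_cases j <;> simp [codingShift]

theorem codingShift_eq_zero_iff (j : Fin 6) : codingShift j = 0 ↔ (j : ℕ) = 2 ∨ (j : ℕ) = 3 := by
  fin_cases j <;> simp [codingShift]

theorem coding_step_eq (j : Fin 6) (z : ℝ) :
    3 * z - (((j : ℕ) : ℝ) - 3) + (if (j : ℕ) % 2 = 0 then (-1 : ℝ) else 0) =
      3 * z - codingShift j := by
  fin_cases j <;> norm_num [codingShift] <;> ring

theorem mem_Ioo_of_mem_digitInterval {j : Fin 6} {z : ℝ}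
    (hz : z ∈ Ioo ((((j : ℕ) : ℝ) - 3) / 3) ((((j : ℕ) : ℝ) - 2) / 3)) : z ∈ Ioo (-1) 1 := by
  have hj : ((j : ℕ) : ℝ) ≤ 5 := by exact_mod_cast Nat.le_of_lt_succ j.isLt
  obtain ⟨hz₀, hz₁⟩ := hz
  constructor <;> linarith [Nat.cast_nonneg (α := ℝ) (j : ℕ)]

theorem cantor_diff_counting_formula_general (C : Set ℝ) (hne : C.Nonempty) (hc : IsCompact C)
    (hself : C = (fun x : ℝ => x / 3) '' C ∪ (fun x : ℝ => (x + 2) / 3) '' C)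
    (x : ℝ)
    (i : ℕ → Fin 6) (y : ℕ → ℝ) (hy0 : y 0 = x)
    (hmem : ∀ k : ℕ, y k ∈ Set.Ioo ((((i k : ℕ) : ℝ) - 3) / 3) ((((i k : ℕ) : ℝ) - 2) / 3))
    (hrec : ∀ k : ℕ, y (k + 1) =
      3 * y k - (((i k : ℕ) : ℝ) - 3) + (if (i k : ℕ) % 2 = 0 then (-1 : ℝ) else 0)) :
    (∀ u : ℕ, {k : ℕ | (i k : ℕ) = 2 ∨ (i k : ℕ) = 3}.encard = u →
      {p : ℝ × ℝ | p.1 ∈ C ∧ p.2 ∈ C ∧ -p.1 + p.2 = x}.encard = 2 ^ u) ∧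
    ({k : ℕ | (i k : ℕ) = 2 ∨ (i k : ℕ) = 3}.Infinite →
      {p : ℝ × ℝ | p.1 ∈ C ∧ p.2 ∈ C ∧ -p.1 + p.2 = x}.encard = ⊤) := by
  have h01 := subset_Icc_of_selfSimilar hne hc hself
  have hd k := codingShift_mem (i k)
  have hw k := mem_Ioo_of_mem_digitInterval (hmem k)
  have hstep k : y (k + 1) = 3 * y k - codingShift (i k) := (hrec k).trans (coding_step_eq _ _)
  have hcount n := hy0 ▸ encard_diffFiber_orbit h01 hself hd hw hstep n
  have hnonempty n := diffFiber_nonempty hne hc hself (Ioo_subset_Icc_self (hw n))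
  have hzero : {k : ℕ | (i k : ℕ) = 2 ∨ (i k : ℕ) = 3} = {k | codingShift (i k) = 0} := by
    simp only [codingShift_eq_zero_iff]
  rw [hzero]
  refine ⟨fun u hu => ?_, fun hinf => ?_⟩
  · obtain ⟨n, hn, htail⟩ := Nat.exists_count_eq_of_encard_eq hu
    have hsub := diffFiber_orbit_subsingleton h01 hself
      (fun k hk => (hd k).imp_right (Or.resolve_left · (htail k hk))) hw hstep
    have hone : (diffFiber C (y n)).encard = 1 :=
      (encard_le_one_iff_subsingleton.2 hsub).antisymm (one_le_encard_iff_nonempty.2 (hnonempty n))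
    change (diffFiber C x).encard = 2 ^ u
    rw [hcount n, hn, hone, mul_one]
  · change (diffFiber C x).encard = ⊤
    rw [ENat.eq_top_iff_forall_ge]
    intro m
    calc (m : ℕ∞) ≤ 2 ^ m := by exact_mod_cast Nat.lt_two_pow_self.le
      _ = 2 ^ Nat.count _ (Nat.nth _ m) := by rw [Nat.count_nth_of_infinite hinf]
      _ ≤ _ := by
        rw [hcount]
        exact le_mul_of_one_le_right' (one_le_encard_iff_nonempty.2 (hnonempty _))

/-- For the middle-third Cantor set `C` and `S_x = {(b₁,b₂) ∈ C × C : -b₁ + b₂ = x}`: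
if `x ∈ [-1,1]` is not a triadic rational and has the six-symbol coding `i₀i₁i₂⋯`
(where digit `j` represents the integer interval `I_j = 3⁻¹[j-3, j-2]`, the orbit `y k`
stays in the interior of `I_{i k}` and evolves by the expanding maps `y ↦ 3y - (j-3) + t(j)`
with type `t(j) = -1` for even `j` and `t(j) = 0` for odd `j`), then
`Card(S_x) = ∏_k η(i_k)` where `η = 2` on digits `{2,3}` and `η = 1` on `{0,1,4,5}`:
in particular `Card(S_x)` is `2^u` if the digits `2, 3` occur exactly `u` times, and
`S_x` is infinite if they occur infinitely often. -/
theorem cantor_diff_counting_formula (C : Set ℝ) (hne : C.Nonempty) (hc : IsCompact C)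
    (hself : C = (fun x : ℝ => x / 3) '' C ∪ (fun x : ℝ => (x + 2) / 3) '' C)
    (x : ℝ) (hx : x ∈ Set.Icc (-1 : ℝ) 1)
    (hxnt : ¬ ∃ q₁ q₂ : ℤ, x = (q₁ : ℝ) / (3 : ℝ) ^ q₂)
    (i : ℕ → Fin 6) (y : ℕ → ℝ) (hy0 : y 0 = x)
    (hmem : ∀ k : ℕ, y k ∈ Set.Ioo ((((i k : ℕ) : ℝ) - 3) / 3) ((((i k : ℕ) : ℝ) - 2) / 3))
    (hrec : ∀ k : ℕ, y (k + 1) =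
      3 * y k - (((i k : ℕ) : ℝ) - 3) + (if (i k : ℕ) % 2 = 0 then (-1 : ℝ) else 0)) :
    (∀ u : ℕ, {k : ℕ | (i k : ℕ) = 2 ∨ (i k : ℕ) = 3}.encard = u →
      {p : ℝ × ℝ | p.1 ∈ C ∧ p.2 ∈ C ∧ -p.1 + p.2 = x}.encard = 2 ^ u) ∧
    ({k : ℕ | (i k : ℕ) = 2 ∨ (i k : ℕ) = 3}.Infinite →
      {p : ℝ × ℝ | p.1 ∈ C ∧ p.2 ∈ C ∧ -p.1 + p.2 = x}.encard = ⊤) :=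
  cantor_diff_counting_formula_general C hne hc hself x i y hy0 hmem hrec
end

section
/- Let C be the middle-third Cantor set and S_x = {(b₁, b₂) ∈ C × C : −b₁ + b₂ = x}. For each u ∈ ℕ⁺, the set U_{3·2^u} = {x ∈ [−1,1] : Card(S_x) = 3·2^u} is contained in the countable set {q₁/3^{q₂} : q₁, q₂ ∈ ℤ} and is countably infinite; hence dim_H U_{3·2^u} = 0. -/
open Set
noncomputable section
namespace CantorAux

def S (C : Set ℝ) (x : ℝ) : Set (ℝ × ℝ) := {p | p.1 ∈ C ∧ p.2 ∈ C ∧ -p.1 + p.2 = x}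
def F (C : Set ℝ) (x : ℝ) : ℕ∞ := (S C x).encard

structure Good (C : Set ℝ) : Prop where
  sub : C ⊆ Set.Icc 0 1
  zero : (0:ℝ) ∈ C
  one : (1:ℝ) ∈ C
  div3 : ∀ c ∈ C, c/3 ∈ C
  div3' : ∀ c ∈ C, (c+2)/3 ∈ C
  gap : ∀ b ∈ C, b ≤ 1/3 ∨ 2/3 ≤ b
  up : ∀ b ∈ C, b ≤ 1/3 → 3*b ∈ C
  up' : ∀ b ∈ C, 2/3 ≤ b → 3*b - 2 ∈ C

theorem good_of (C : Set ℝ) (hne : C.Nonempty) (hc : IsCompact C)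
    (hself : C = (fun x : ℝ => x / 3) '' C ∪ (fun x : ℝ => (x + 2) / 3) '' C) :
    Good C := by
  have hdiv3 : ∀ c ∈ C, c/3 ∈ C := by
    intro c hcC
    rw [hself]; exact Or.inl ⟨c, hcC, rfl⟩
  have hdiv3' : ∀ c ∈ C, (c+2)/3 ∈ C := by
    intro c hcC
    rw [hself]; exact Or.inr ⟨c, hcC, rfl⟩
  -- boundedness
  have hMmem : sSup C ∈ C := hc.sSup_mem hne
  have hmmem : sInf C ∈ C := hc.sInf_mem hne
  have hbddA : BddAbove C := hc.bddAbove
  have hbddB : BddBelow C := hc.bddBelow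
  have hle : ∀ b ∈ C, b ≤ sSup C := fun b hb => le_csSup hbddA hb
  have hge : ∀ b ∈ C, sInf C ≤ b := fun b hb => csInf_le hbddB hb
  have hM1 : sSup C = 1 := by
    have h1 : (sSup C + 2)/3 ≤ sSup C := hle _ (hdiv3' _ hMmem)
    have h2 : sSup C ∈ (fun x : ℝ => x / 3) '' C ∪ (fun x : ℝ => (x + 2) / 3) '' C := by
      rw [← hself]; exact hMmem
    have h3 : sSup C ≤ 1 := by
      rcases h2 with ⟨c, hcC, hce⟩ | ⟨c, hcC, hce⟩
      · have := hle _ hcC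
        simp only at hce
        nlinarith [hge _ hcC, hge _ (hdiv3 _ hmmem)]
      · have := hle _ hcC
        simp only at hce
        linarith
    linarith
  have hm0 : sInf C = 0 := by
    have h1 : sInf C ≤ sInf C / 3 := hge _ (hdiv3 _ hmmem)
    have h2 : sInf C ∈ (fun x : ℝ => x / 3) '' C ∪ (fun x : ℝ => (x + 2) / 3) '' C := by
      rw [← hself]; exact hmmem
    have h3 : 0 ≤ sInf C := by
      rcases h2 with ⟨c, hcC, hce⟩ | ⟨c, hcC, hce⟩
      · have := hge _ hcC
        simp only at hce
        linarith
      · have := hge _ hcC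
        simp only at hce
        nlinarith [hle _ hcC, hle _ (hdiv3' _ hMmem), hM1]
    linarith
  have hsub : C ⊆ Set.Icc 0 1 := by
    intro b hb
    exact ⟨hm0 ▸ hge _ hb, hM1 ▸ hle _ hb⟩
  have hgap : ∀ b ∈ C, b ≤ 1/3 ∨ 2/3 ≤ b := by
    intro b hb
    have h2 : b ∈ (fun x : ℝ => x / 3) '' C ∪ (fun x : ℝ => (x + 2) / 3) '' C := by
      rw [← hself]; exact hb
    rcases h2 with ⟨c, hcC, hce⟩ | ⟨c, hcC, hce⟩
    · left; have := (hsub hcC).2; simp only at hce; linarith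
    · right; have := (hsub hcC).1; simp only at hce; linarith
  have hup : ∀ b ∈ C, b ≤ 1/3 → 3*b ∈ C := by
    intro b hb hb3
    have h2 : b ∈ (fun x : ℝ => x / 3) '' C ∪ (fun x : ℝ => (x + 2) / 3) '' C := by
      rw [← hself]; exact hb
    rcases h2 with ⟨c, hcC, hce⟩ | ⟨c, hcC, hce⟩
    · simp only at hce
      have : 3*b = c := by linarith
      rwa [this]
    · simp only at hce
      have := (hsub hcC).1
      exfalso
      by_cases hbe : b = 1/3
      · -- b = 1/3 = (c+2)/3 means c = -1, impossible since c ≥ 0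
        rw [hbe] at hce; nlinarith
      · have : b < 1/3 := lt_of_le_of_ne hb3 hbe
        nlinarith
  have hup' : ∀ b ∈ C, 2/3 ≤ b → 3*b - 2 ∈ C := by
    intro b hb hb3
    have h2 : b ∈ (fun x : ℝ => x / 3) '' C ∪ (fun x : ℝ => (x + 2) / 3) '' C := by
      rw [← hself]; exact hb
    rcases h2 with ⟨c, hcC, hce⟩ | ⟨c, hcC, hce⟩
    · simp only at hce
      have := (hsub hcC).2
      exfalso; nlinarith
    · simp only at hce
      have : 3*b - 2 = c := by linarith
      rwa [this]
  have hzero : (0:ℝ) ∈ C := hm0 ▸ hmmem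
  have hone : (1:ℝ) ∈ C := hM1 ▸ hMmem
  exact ⟨hsub, hzero, hone, hdiv3, hdiv3', hgap, hup, hup'⟩


variable {C : Set ℝ}

theorem step_right (h : Good C) {z : ℝ} (hz : 1/3 < z) {r : ℝ × ℝ} (hr : r ∈ S C z) :
    (3*r.1, 3*r.2 - 2) ∈ S C (3*z - 2) := by
  obtain ⟨h1, h2, h3⟩ := hr
  have hb1 : r.1 ≤ 1/3 := by
    rcases h.gap _ h1 with h' | h'
    · exact h'
    · exfalso; have := (h.sub h2).2; linarith
  have hb2 : 2/3 ≤ r.2 := by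
    rcases h.gap _ h2 with h' | h'
    · exfalso; have := (h.sub h1).1; linarith
    · exact h'
  exact ⟨h.up _ h1 hb1, h.up' _ h2 hb2, by dsimp only; linarith⟩

theorem step_left (h : Good C) {z : ℝ} (hz : z < -(1/3)) {r : ℝ × ℝ} (hr : r ∈ S C z) :
    (3*r.1 - 2, 3*r.2) ∈ S C (3*z + 2) := by
  obtain ⟨h1, h2, h3⟩ := hr
  have hb1 : 2/3 ≤ r.1 := by
    rcases h.gap _ h1 with h' | h'
    · exfalso; have := (h.sub h2).1; linarith
    · exact h'
  have hb2 : r.2 ≤ 1/3 := by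
    rcases h.gap _ h2 with h' | h'
    · exact h'
    · exfalso; have := (h.sub h1).2; linarith
  exact ⟨h.up' _ h1 hb1, h.up _ h2 hb2, by dsimp only; linarith⟩

theorem S_eq_right (h : Good C) {x : ℝ} (hx : 1/3 < x) :
    S C x = (fun p : ℝ × ℝ => (p.1/3, (p.2+2)/3)) '' S C (3*x - 2) := by
  ext p
  constructor
  · intro hp
    refine ⟨(3*p.1, 3*p.2 - 2), step_right h hx hp, ?_⟩
    simp only [Prod.ext_iff]
    constructor <;> ring
  · rintro ⟨r, ⟨h1, h2, h3⟩, rfl⟩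
    refine ⟨h.div3 _ h1, h.div3' _ h2, by simp only; linarith⟩

theorem S_eq_left (h : Good C) {x : ℝ} (hx : x < -(1/3)) :
    S C x = (fun p : ℝ × ℝ => ((p.1+2)/3, p.2/3)) '' S C (3*x + 2) := by
  ext p
  constructor
  · intro hp
    refine ⟨(3*p.1 - 2, 3*p.2), step_left h hx hp, ?_⟩
    simp only [Prod.ext_iff]
    constructor <;> ring
  · rintro ⟨r, ⟨h1, h2, h3⟩, rfl⟩
    refine ⟨h.div3' _ h1, h.div3 _ h2, by simp only; linarith⟩

theorem F_right (h : Good C) {x : ℝ} (hx : 1/3 < x) : F C x = F C (3*x - 2) := by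
  rw [F, S_eq_right h hx, F]
  apply Set.InjOn.encard_image
  intro p _ q _ hpq
  simp only [Prod.ext_iff] at hpq ⊢
  constructor <;> [linarith [hpq.1]; linarith [hpq.2]]

theorem F_left (h : Good C) {x : ℝ} (hx : x < -(1/3)) : F C x = F C (3*x + 2) := by
  rw [F, S_eq_left h hx, F]
  apply Set.InjOn.encard_image
  intro p _ q _ hpq
  simp only [Prod.ext_iff] at hpq ⊢
  constructor <;> [linarith [hpq.1]; linarith [hpq.2]]

theorem S_eq_mid (h : Good C) {x : ℝ} (hx : |x| < 1/3) :
    S C x = (fun p : ℝ × ℝ => (p.1/3, p.2/3)) '' S C (3*x)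
      ∪ (fun p : ℝ × ℝ => ((p.1+2)/3, (p.2+2)/3)) '' S C (3*x) := by
  rw [abs_lt] at hx
  ext p
  constructor
  · rintro ⟨h1, h2, h3⟩
    rcases h.gap _ h1 with hg1 | hg1 <;> rcases h.gap _ h2 with hg2 | hg2
    · refine Or.inl ⟨(3*p.1, 3*p.2), ⟨h.up _ h1 hg1, h.up _ h2 hg2, by dsimp only; linarith⟩, ?_⟩
      simp only [Prod.ext_iff]; constructor <;> ring
    · exfalso; linarith
    · exfalso; linarith
    · refine Or.inr ⟨(3*p.1 - 2, 3*p.2 - 2), ⟨h.up' _ h1 hg1, h.up' _ h2 hg2, by dsimp only; linarith⟩, ?_⟩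
      simp only [Prod.ext_iff]; constructor <;> ring
  · rintro (⟨r, ⟨h1, h2, h3⟩, rfl⟩ | ⟨r, ⟨h1, h2, h3⟩, rfl⟩)
    · exact ⟨h.div3 _ h1, h.div3 _ h2, by simp only; linarith⟩
    · exact ⟨h.div3' _ h1, h.div3' _ h2, by simp only; linarith⟩

theorem F_mid (h : Good C) {x : ℝ} (hx : |x| < 1/3) : F C x = 2 * F C (3*x) := by
  have e1 : ((fun p : ℝ × ℝ => (p.1/3, p.2/3)) '' S C (3*x)).encard = F C (3*x) := by
    apply Set.InjOn.encard_image
    intro p _ q _ hpq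
    simp only [Prod.ext_iff] at hpq ⊢
    constructor <;> [linarith [hpq.1]; linarith [hpq.2]]
  have e2 : ((fun p : ℝ × ℝ => ((p.1+2)/3, (p.2+2)/3)) '' S C (3*x)).encard = F C (3*x) := by
    apply Set.InjOn.encard_image
    intro p _ q _ hpq
    simp only [Prod.ext_iff] at hpq ⊢
    constructor <;> [linarith [hpq.1]; linarith [hpq.2]]
  rw [F, S_eq_mid h hx, Set.encard_union_eq, e1, e2, two_mul]
  · rw [Set.disjoint_left]
    rintro p ⟨r, ⟨h1, _, _⟩, rfl⟩ ⟨r', ⟨h1', _, _⟩, he⟩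
    have a1 := (h.sub h1).2
    have a2 := (h.sub h1').1
    simp only [Prod.ext_iff] at he
    have := he.1
    linarith

theorem F_third (h : Good C) : F C (1/3) = 3 := by
  have hmem13 : (1:ℝ)/3 ∈ C := by
    have := h.div3 _ h.one; norm_num at this ⊢; exact this
  have hmem23 : (2:ℝ)/3 ∈ C := by
    have := h.div3' _ h.zero; norm_num at this ⊢; exact this
  have hSe : S C (1/3) = {((0:ℝ), (1:ℝ)/3), ((1:ℝ)/3, (2:ℝ)/3), ((2:ℝ)/3, (1:ℝ))} := by
    ext p
    constructor
    · rintro ⟨h1, h2, h3⟩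
      have hs1 := h.sub h1
      have hs2 := h.sub h2
      rcases h.gap _ h1 with hg1 | hg1 <;> rcases h.gap _ h2 with hg2 | hg2
      · left
        have hp1 : p.1 = 0 := le_antisymm (by linarith [hs1.1]) hs1.1
        have hp2 : p.2 = 1/3 := by linarith
        exact Prod.ext hp1 hp2
      · right; left
        have hp1 : p.1 = 1/3 := by linarith [hs2.2]
        have hp2 : p.2 = 2/3 := by linarith
        exact Prod.ext hp1 hp2
      · exfalso; linarith
      · right; right
        have hp2 : p.2 = 1 := by linarith [hs1.2, hs2.2]
        have hp1 : p.1 = 2/3 := by linarith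
        exact Prod.ext hp1 hp2
    · rintro (rfl | rfl | rfl)
      · exact ⟨h.zero, hmem13, by norm_num⟩
      · exact ⟨hmem13, hmem23, by norm_num⟩
      · exact ⟨hmem23, h.one, by norm_num⟩
  rw [F, hSe]
  rw [Set.encard_eq_three]
  refine ⟨_, _, _, ?_, ?_, ?_, rfl⟩ <;> simp <;> norm_num


/-! ### Triadic rationals -/

def Tri : Set ℝ := {z : ℝ | ∃ q₁ q₂ : ℤ, z = (q₁ : ℝ) / (3 : ℝ) ^ q₂}

theorem mem_tri_nat {x : ℝ} (hx : x ∈ Tri) : ∃ (q : ℤ) (k : ℕ), x = (q : ℝ) / 3 ^ k := by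
  obtain ⟨q₁, q₂, rfl⟩ := hx
  rcases le_or_gt 0 q₂ with h | h
  · refine ⟨q₁, q₂.toNat, ?_⟩
    rw [← zpow_natCast, Int.toNat_of_nonneg h]
  · refine ⟨q₁ * 3 ^ (-q₂).toNat, 0, ?_⟩
    have h3 : ((3:ℝ) ^ q₂)⁻¹ = 3 ^ (-q₂).toNat := by
      rw [← zpow_natCast, Int.toNat_of_nonneg (by omega), zpow_neg]
    push_cast
    rw [pow_zero, div_one, div_eq_mul_inv, h3]

theorem tri_step (c : ℤ) {y : ℝ} (hy : y ∈ Tri) : (y + c) / 3 ∈ Tri := by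
  obtain ⟨q, k, rfl⟩ := mem_tri_nat hy
  refine ⟨q + c * 3 ^ k, (k + 1 : ℕ), ?_⟩
  have h3 : (3:ℝ) ^ ((k + 1 : ℕ) : ℤ) = 3 ^ (k + 1) := by
    rw [zpow_natCast]
  rw [h3]
  push_cast
  have hk : (3:ℝ) ^ k ≠ 0 := by positivity
  rw [div_eq_div_iff (by positivity) (by positivity), pow_succ]
  field_simp

theorem tri_third : (1:ℝ)/3 ∈ Tri := ⟨1, 1, by norm_num⟩

theorem tri_third' : -(1/3 : ℝ) ∈ Tri := ⟨-1, 1, by norm_num⟩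

/-! ### The orbit map -/

def TT (x : ℝ) : ℝ := if 1/3 < x then 3*x - 2 else if x < -(1/3) then 3*x + 2 else 3*x

theorem tri_of_TT {x : ℝ} (h : TT x ∈ Tri) : x ∈ Tri := by
  unfold TT at h
  split_ifs at h with h1 h2
  · have he : x = ((3*x - 2) + (2:ℤ))/3 := by push_cast; ring
    rw [he]; exact tri_step 2 h
  · have he : x = ((3*x + 2) + (-2:ℤ))/3 := by push_cast; ring
    rw [he]; exact tri_step (-2) h
  · have he : x = ((3*x) + (0:ℤ))/3 := by push_cast; ring
    rw [he]; exact tri_step 0 h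

theorem tri_of_iter {x : ℝ} (k : ℕ) (h : TT^[k] x ∈ Tri) : x ∈ Tri := by
  induction k with
  | zero => exact h
  | succ k ih =>
    rw [Function.iterate_succ_apply'] at h
    exact ih (tri_of_TT h)

theorem F_TT (hG : Good C) {x : ℝ} (hx : 1/3 < |x|) : F C x = F C (TT x) := by
  unfold TT
  rcases lt_or_ge (1/3 : ℝ) x with h1 | h1
  · rw [if_pos h1]; exact F_right hG h1
  · have h2 : x < -(1/3) := by
      rcases lt_abs.mp hx with h | h
      · exact absurd h (not_lt.mpr h1)
      · linarith
    rw [if_neg (not_lt.mpr h1), if_pos h2]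
    exact F_left hG h2

theorem F_chain (hG : Good C) {x : ℝ} (k : ℕ) (hall : ∀ j < k, 1/3 < |TT^[j] x|) :
    F C (TT^[k] x) = F C x := by
  induction k with
  | zero => rfl
  | succ k ih =>
    rw [Function.iterate_succ_apply', ← F_TT hG (hall k (Nat.lt_succ_self k))]
    exact ih (fun j hj => hall j (hj.trans (Nat.lt_succ_self k)))

/-! ### Expansion: forever-outer points have at most one representation -/

def st (z : ℝ) (r : ℝ × ℝ) : ℝ × ℝ := if 1/3 < z then (3*r.1, 3*r.2 - 2) else (3*r.1 - 2, 3*r.2)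

theorem sub_of_forever (hG : Good C) {x : ℝ} (hall : ∀ k, 1/3 < |TT^[k] x|) :
    (S C x).Subsingleton := by
  intro p hp q hq
  by_contra hne
  set P : ℕ → (ℝ × ℝ) × (ℝ × ℝ) :=
    fun k => Nat.rec (p, q) (fun k pq => (st (TT^[k] x) pq.1, st (TT^[k] x) pq.2)) k with hP
  have key : ∀ k, (P k).1 ∈ S C (TT^[k] x) ∧ (P k).2 ∈ S C (TT^[k] x) ∧
      (P k).1.1 - (P k).2.1 = 3^k * (p.1 - q.1) ∧ (P k).1.2 - (P k).2.2 = 3^k * (p.2 - q.2) := by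
    intro k
    induction k with
    | zero => exact ⟨hp, hq, by rw [pow_zero, one_mul]; rfl, by rw [pow_zero, one_mul]; rfl⟩
    | succ k ih =>
      obtain ⟨ih1, ih2, ih3, ih4⟩ := ih
      have hz := hall k
      have hPs : P (k+1) = (st (TT^[k] x) (P k).1, st (TT^[k] x) (P k).2) := rfl
      rcases lt_or_ge (1/3 : ℝ) (TT^[k] x) with hc | hc
      · have hTs : TT^[k+1] x = 3 * (TT^[k] x) - 2 := by
          rw [Function.iterate_succ_apply', TT, if_pos hc]
        have hst : ∀ r : ℝ × ℝ, st (TT^[k] x) r = (3*r.1, 3*r.2 - 2) :=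
          fun r => by rw [st, if_pos hc]
        rw [hPs, hst, hst, hTs]
        refine ⟨step_right hG hc ih1, step_right hG hc ih2, ?_, ?_⟩ <;>
          · dsimp only
            rw [pow_succ]
            nlinarith [ih3, ih4]
      · have hc2 : TT^[k] x < -(1/3) := by
          rcases lt_abs.mp hz with h | h
          · exact absurd h (not_lt.mpr hc)
          · linarith
        have hTs : TT^[k+1] x = 3 * (TT^[k] x) + 2 := by
          rw [Function.iterate_succ_apply', TT, if_neg (not_lt.mpr hc), if_pos hc2]
        have hst : ∀ r : ℝ × ℝ, st (TT^[k] x) r = (3*r.1 - 2, 3*r.2) :=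
          fun r => by rw [st, if_neg (not_lt.mpr hc)]
        rw [hPs, hst, hst, hTs]
        refine ⟨step_left hG hc2 ih1, step_left hG hc2 ih2, ?_, ?_⟩ <;>
          · dsimp only
            rw [pow_succ]
            nlinarith [ih3, ih4]
  have hbound : ∀ k, |3^k * (p.1 - q.1)| ≤ 1 ∧ |3^k * (p.2 - q.2)| ≤ 1 := by
    intro k
    obtain ⟨h1, h2, h3, h4⟩ := key k
    obtain ⟨h11, h12, -⟩ := h1
    obtain ⟨h21, h22, -⟩ := h2
    have b11 := hG.sub h11; have b12 := hG.sub h12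
    have b21 := hG.sub h21; have b22 := hG.sub h22
    rw [← h3, ← h4]
    constructor <;> rw [abs_le] <;>
      constructor <;> [linarith [b11.1, b11.2, b21.1, b21.2];
        linarith [b11.1, b11.2, b21.1, b21.2];
        linarith [b12.1, b12.2, b22.1, b22.2];
        linarith [b12.1, b12.2, b22.1, b22.2]]
  have hd : p.1 ≠ q.1 ∨ p.2 ≠ q.2 := by
    by_contra hcc
    push_neg at hcc
    exact hne (Prod.ext hcc.1 hcc.2)
  have harch : ∀ d : ℝ, 0 < d → (∀ k : ℕ, |3^k * d| ≤ 1) → False := by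
    intro d hd0 hk
    obtain ⟨n, hn⟩ := pow_unbounded_of_one_lt (1/d) (by norm_num : (1:ℝ) < 3)
    have := hk n
    rw [abs_of_pos (by positivity)] at this
    have h3 : 1/d < 3^n := hn
    have : (1:ℝ) < 3^n * d := by
      rw [div_lt_iff₀ hd0] at h3
      linarith
    linarith [hk n, this]
  rcases hd with hd | hd
  · rcases lt_or_gt_of_ne (sub_ne_zero.mpr hd) with h | h
    · exact harch (q.1 - p.1) (by linarith) (fun k => by
        have := (hbound k).1
        rw [show (3:ℝ)^k * (q.1 - p.1) = -(3^k * (p.1 - q.1)) by ring, abs_neg]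
        exact this)
    · exact harch (p.1 - q.1) (by linarith) (fun k => (hbound k).1)
  · rcases lt_or_gt_of_ne (sub_ne_zero.mpr hd) with h | h
    · exact harch (q.2 - p.2) (by linarith) (fun k => by
        have := (hbound k).2
        rw [show (3:ℝ)^k * (q.2 - p.2) = -(3^k * (p.2 - q.2)) by ring, abs_neg]
        exact this)
    · exact harch (p.2 - q.2) (by linarith) (fun k => (hbound k).2)

/-! ### Main counting lemma -/

theorem main_count (hG : Good C) : ∀ n : ℕ, ∀ x : ℝ, x ∉ Tri → F C x = n →
    n = 0 ∨ ∃ a : ℕ, n = 2 ^ a := by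
  intro n
  induction n using Nat.strong_induction_on with
  | _ n IH =>
    intro x hxt hFx
    rcases Nat.eq_zero_or_pos n with h0 | hn
    · exact Or.inl h0
    right
    by_cases hall : ∀ k : ℕ, 1/3 < |TT^[k] x|
    · have hss := sub_of_forever hG hall
      have hle : (S C x).encard ≤ 1 :=
        Set.encard_le_one_iff.mpr (fun a b ha hb => hss ha hb)
      rw [show (S C x).encard = F C x from rfl, hFx] at hle
      have : n ≤ 1 := by exact_mod_cast hle
      have : n = 1 := by omega
      exact ⟨0, by simpa using this⟩
    · push_neg at hall
      have hall' : ∃ k : ℕ, |TT^[k] x| ≤ 1/3 := hall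
      classical
      let k := Nat.find hall'
      have hk : |TT^[k] x| ≤ 1/3 := Nat.find_spec hall'
      have hmin : ∀ j < k, 1/3 < |TT^[j] x| := fun j hj =>
        lt_of_not_ge (Nat.find_min hall' hj)
      set z := TT^[k] x with hz
      have hFz : F C z = n := by rw [F_chain hG k hmin, hFx]
      have hzt : z ∉ Tri := fun hzz => hxt (tri_of_iter k hzz)
      have hzlt : |z| < 1/3 := by
        rcases lt_or_eq_of_le hk with h | h
        · exact h
        · exfalso
          rcases abs_eq (by norm_num : (0:ℝ) ≤ 1/3) |>.mp h with h' | h'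
          · exact hzt (h' ▸ tri_third)
          · exact hzt (h' ▸ tri_third')
      have hrec : (n : ℕ∞) = 2 * F C (3 * z) := by rw [← hFz]; exact F_mid hG hzlt
      have hne_top : F C (3 * z) ≠ ⊤ := by
        intro htop
        rw [htop] at hrec
        simp at hrec
      obtain ⟨m, hm⟩ := WithTop.ne_top_iff_exists.mp hne_top
      have hnm : n = 2 * m := by
        rw [← hm] at hrec
        have h2 : ((2 * m : ℕ) : ℕ∞) = 2 * (m : ℕ∞) := by push_cast; rfl
        exact Nat.cast_inj.mp (hrec.trans h2.symm)
      have hm0 : m ≠ 0 := by omega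
      have hmlt : m < n := by omega
      have h3zt : 3 * z ∉ Tri := by
        intro h3z
        apply hzt
        have he : z = ((3 * z) + (0:ℤ))/3 := by push_cast; ring
        rw [he]; exact tri_step 0 h3z
      rcases IH m hmlt (3 * z) h3zt hm.symm with h | ⟨a, ha⟩
      · exact absurd h hm0
      · exact ⟨a + 1, by rw [pow_succ]; omega⟩

/-! ### Explicit values -/

theorem F_pow (hG : Good C) (m : ℕ) : F C (1/3^(m+1)) = 3 * 2 ^ m := by
  induction m with
  | zero =>
    rw [show (1:ℝ)/3^(0+1) = 1/3 by norm_num, F_third hG]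
    rfl
  | succ m ih =>
    have hlt : |(1:ℝ)/3^(m+2)| < 1/3 := by
      rw [abs_of_pos (by positivity)]
      rw [div_lt_div_iff₀ (by positivity) (by norm_num)]
      have : (3:ℝ) < 3^(m+2) := by
        calc (3:ℝ) = 3^1 := (pow_one 3).symm
        _ < 3^(m+2) := by
          apply pow_lt_pow_right₀ (by norm_num)
          omega
      linarith
    have h3x : 3 * ((1:ℝ)/3^(m+2)) = 1/3^(m+1) := by
      rw [pow_succ]
      field_simp
    rw [show m + 1 + 1 = m + 2 from rfl, F_mid hG hlt, h3x, ih]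
    ring

def seqy (u : ℕ) : ℕ → ℝ
  | 0 => 1/3^(u+1)
  | (k+1) => (seqy u k + 2)/3

theorem seqy_bounds (u : ℕ) : ∀ k, 0 < seqy u k ∧ seqy u k < 1 := by
  intro k
  induction k with
  | zero =>
    constructor
    · show (0:ℝ) < 1/3^(u+1); positivity
    · show (1:ℝ)/3^(u+1) < 1
      rw [div_lt_one (by positivity)]
      exact one_lt_pow₀ (by norm_num) (by omega)
  | succ k ih =>
    constructor
    · show (0:ℝ) < (seqy u k + 2)/3; linarith [ih.1]
    · show (seqy u k + 2)/3 < 1; linarith [ih.2]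

theorem seqy_F (hG : Good C) (u : ℕ) : ∀ k, F C (seqy u k) = 3 * 2 ^ u := by
  intro k
  induction k with
  | zero => exact F_pow hG u
  | succ k ih =>
    have h1 : (1:ℝ)/3 < seqy u (k+1) := by
      show (1:ℝ)/3 < (seqy u k + 2)/3
      have := (seqy_bounds u k).1
      linarith
    have h2 : 3 * seqy u (k+1) - 2 = seqy u k := by
      show 3 * ((seqy u k + 2)/3) - 2 = seqy u k
      ring
    rw [F_right hG h1, h2, ih]

theorem seqy_mono (u : ℕ) : StrictMono (seqy u) := by
  apply strictMono_nat_of_lt_succ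
  intro k
  have := (seqy_bounds u k).2
  show seqy u k < (seqy u k + 2)/3
  linarith

end CantorAux


/-- For the middle-third Cantor set `C` and `S_x = {(b₁,b₂) ∈ C × C : -b₁ + b₂ = x}`, for each
`u ∈ ℕ⁺` the set `U_{3·2^u}` of `x ∈ [-1,1]` with exactly `3·2^u` representations is contained
in the triadic rationals `{q₁/3^{q₂}}`, is countably infinite, and has Hausdorff dimension 0. -/
theorem cantor_diff_three_times_power_of_two (C : Set ℝ) (hne : C.Nonempty)
    (hc : IsCompact C)
    (hself : C = (fun x : ℝ => x / 3) '' C ∪ (fun x : ℝ => (x + 2) / 3) '' C)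
    (u : ℕ) (hu : 1 ≤ u) (U : Set ℝ)
    (hU : U = {x ∈ Set.Icc (-1 : ℝ) 1 |
      {p : ℝ × ℝ | p.1 ∈ C ∧ p.2 ∈ C ∧ -p.1 + p.2 = x}.encard = 3 * 2 ^ u}) :
    U ⊆ {z : ℝ | ∃ q₁ q₂ : ℤ, z = (q₁ : ℝ) / (3 : ℝ) ^ q₂} ∧
    U.Countable ∧ U.Infinite ∧ dimH U = 0 := by
  have hG : CantorAux.Good C := CantorAux.good_of C hne hc hself
  have hTriEq : {z : ℝ | ∃ q₁ q₂ : ℤ, z = (q₁ : ℝ) / (3 : ℝ) ^ q₂} = CantorAux.Tri := rfl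
  have hcast : ((3 * 2 ^ u : ℕ) : ℕ∞) = 3 * 2 ^ u := by push_cast; rfl
  have hsubTri : U ⊆ CantorAux.Tri := by
    intro x hx
    rw [hU] at hx
    obtain ⟨hxI, hxcard⟩ := hx
    by_contra hxt
    have hF : CantorAux.F C x = ((3 * 2 ^ u : ℕ) : ℕ∞) := by
      rw [hcast]
      exact hxcard
    rcases CantorAux.main_count hG (3 * 2 ^ u) x hxt hF with h0 | ⟨a, ha⟩
    · have : 0 < 3 * 2 ^ u := by positivity
      omega
    · have h3 : (3 : ℕ) ∣ 2 ^ a := ⟨2 ^ u, ha.symm⟩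
      have := Nat.prime_three.dvd_of_dvd_pow h3
      norm_num at this
  have hTriCount : (CantorAux.Tri).Countable := by
    have he : CantorAux.Tri = Set.range (fun p : ℤ × ℤ => (p.1 : ℝ) / (3:ℝ) ^ p.2) := by
      ext z
      constructor
      · rintro ⟨q₁, q₂, rfl⟩
        exact ⟨(q₁, q₂), rfl⟩
      · rintro ⟨⟨q₁, q₂⟩, rfl⟩
        exact ⟨q₁, q₂, rfl⟩
    rw [he]
    exact Set.countable_range _
  have hUc : U.Countable := hTriCount.mono hsubTri
  refine ⟨hTriEq ▸ hsubTri, hUc, ?_, hUc.dimH_zero⟩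
  apply Set.infinite_of_injective_forall_mem (f := CantorAux.seqy u)
    (CantorAux.seqy_mono u).injective
  intro k
  rw [hU]
  obtain ⟨hb1, hb2⟩ := CantorAux.seqy_bounds u k
  refine ⟨⟨by linarith, by linarith⟩, ?_⟩
  exact CantorAux.seqy_F hG u k
end
end

section
/- Let C be the middle-third Cantor set and let H_x = {(y₁, y₂) ∈ ℝ² : −y₁ + y₂ = x}. For x ∈ [−1,1], the line H_x intersects the square S_{(i₁,i₂)}([0,1]²) = ((i₁,i₂) + [0,1]²)/3 (for (i₁,i₂) ∈ {0,2}²) if and only if it intersects S_{(i₁,i₂)}(C × C). -/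
/-- For the middle-third Cantor set `C`, `x ∈ [-1,1]` and `(i₁,i₂) ∈ {0,2}²`, the line
`H_x = {(y₁,y₂) : -y₁ + y₂ = x}` intersects the square `S_{(i₁,i₂)}([0,1]²)` if and only if
it intersects `S_{(i₁,i₂)}(C × C)`, where `S_{(i₁,i₂)}(z) = (z + (i₁,i₂))/3`. -/
theorem line_meets_square_iff_meets_cantor_square (C : Set ℝ) (hne : C.Nonempty)
    (hc : IsCompact C)
    (hself : C = (fun x : ℝ => x / 3) '' C ∪ (fun x : ℝ => (x + 2) / 3) '' C)
    (x : ℝ) (hx : x ∈ Set.Icc (-1 : ℝ) 1)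
    (i₁ i₂ : ℝ) (hi₁ : i₁ = 0 ∨ i₁ = 2) (hi₂ : i₂ = 0 ∨ i₂ = 2) :
    ({p : ℝ × ℝ | -p.1 + p.2 = x} ∩
      (fun p : ℝ × ℝ => ((p.1 + i₁) / 3, (p.2 + i₂) / 3)) ''
        (Set.Icc (0 : ℝ) 1 ×ˢ Set.Icc (0 : ℝ) 1)).Nonempty ↔
    ({p : ℝ × ℝ | -p.1 + p.2 = x} ∩
      (fun p : ℝ × ℝ => ((p.1 + i₁) / 3, (p.2 + i₂) / 3)) '' (C ×ˢ C)).Nonempty := by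
  have hmem1 : ∀ c ∈ C, c / 3 ∈ C := by
    intro c hcC; rw [hself]; exact Or.inl ⟨c, hcC, rfl⟩
  have hmem2 : ∀ c ∈ C, (c + 2) / 3 ∈ C := by
    intro c hcC; rw [hself]; exact Or.inr ⟨c, hcC, rfl⟩
  have hbddA : BddAbove C := hc.bddAbove
  have hbddB : BddBelow C := hc.bddBelow
  have hMmem : sSup C ∈ C := hc.sSup_mem hne
  have hmmem : sInf C ∈ C := hc.sInf_mem hne
  have hM1 : sSup C ≤ 1 := by
    have h : sSup C ∈ (fun x : ℝ => x / 3) '' C ∪ (fun x : ℝ => (x + 2) / 3) '' C := by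
      rw [← hself]; exact hMmem
    rcases h with ⟨c, hcC, hce⟩ | ⟨c, hcC, hce⟩
    · simp only at hce
      have h2 : (sSup C + 2) / 3 ≤ sSup C := le_csSup hbddA (hmem2 _ hMmem)
      have h3 : c ≤ sSup C := le_csSup hbddA hcC
      linarith
    · simp only at hce
      have h3 : c ≤ sSup C := le_csSup hbddA hcC
      linarith
  have hm0 : 0 ≤ sInf C := by
    have h : sInf C ∈ (fun x : ℝ => x / 3) '' C ∪ (fun x : ℝ => (x + 2) / 3) '' C := by
      rw [← hself]; exact hmmem
    rcases h with ⟨c, hcC, hce⟩ | ⟨c, hcC, hce⟩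
    · simp only at hce
      have h3 : sInf C ≤ c := csInf_le hbddB hcC
      linarith
    · simp only at hce
      have h2 : sInf C ≤ sInf C / 3 := csInf_le hbddB (hmem1 _ hmmem)
      have h3 : sInf C ≤ c := csInf_le hbddB hcC
      linarith
  have hsub : C ⊆ Set.Icc (0 : ℝ) 1 := fun c hcC =>
    ⟨le_trans hm0 (csInf_le hbddB hcC), le_trans (le_csSup hbddA hcC) hM1⟩
  -- approximation lemma
  have approx : ∀ n : ℕ, ∀ t ∈ Set.Icc (-1 : ℝ) 1,
      ∃ c₁ ∈ C, ∃ c₂ ∈ C, |(-c₁ + c₂) - t| ≤ 2 / 3 ^ n := by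
    intro n
    induction n with
    | zero =>
      intro t ht
      obtain ⟨c, hcC⟩ := hne
      refine ⟨c, hcC, c, hcC, ?_⟩
      have he : -c + c - t = -t := by ring
      rw [he, abs_le]
      norm_num
      constructor <;> linarith [ht.1, ht.2]
    | succ n ih =>
      intro t ht
      obtain ⟨ht1, ht2⟩ := ht
      have hpow : (0 : ℝ) < 3 ^ n := by positivity
      have hpe : (2 : ℝ) / 3 ^ (n + 1) = (2 / 3 ^ n) / 3 := by
        rw [pow_succ]; ring
      rcases le_or_gt t (-1/3) with h | h
      · obtain ⟨c₁, hc₁, c₂, hc₂, hd⟩ := ih (3 * t + 2) ⟨by linarith, by linarith⟩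
        refine ⟨(c₁ + 2) / 3, hmem2 _ hc₁, c₂ / 3, hmem1 _ hc₂, ?_⟩
        rw [hpe]
        have heq : (-(((c₁ : ℝ) + 2) / 3) + c₂ / 3) - t = ((-c₁ + c₂) - (3 * t + 2)) / 3 := by
          ring
        rw [heq, abs_div]
        have h3 : |(3 : ℝ)| = 3 := by norm_num
        rw [h3]
        exact div_le_div_of_nonneg_right hd (by norm_num) |>.trans_eq rfl
      · rcases le_or_gt t (1/3) with h' | h'
        · obtain ⟨c₁, hc₁, c₂, hc₂, hd⟩ := ih (3 * t) ⟨by linarith, by linarith⟩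
          refine ⟨c₁ / 3, hmem1 _ hc₁, c₂ / 3, hmem1 _ hc₂, ?_⟩
          rw [hpe]
          have heq : (-((c₁ : ℝ) / 3) + c₂ / 3) - t = ((-c₁ + c₂) - (3 * t)) / 3 := by ring
          rw [heq, abs_div]
          have h3 : |(3 : ℝ)| = 3 := by norm_num
          rw [h3]
          exact div_le_div_of_nonneg_right hd (by norm_num) |>.trans_eq rfl
        · obtain ⟨c₁, hc₁, c₂, hc₂, hd⟩ := ih (3 * t - 2) ⟨by linarith, by linarith⟩
          refine ⟨c₁ / 3, hmem1 _ hc₁, (c₂ + 2) / 3, hmem2 _ hc₂, ?_⟩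
          rw [hpe]
          have heq : (-((c₁ : ℝ) / 3) + (c₂ + 2) / 3) - t = ((-c₁ + c₂) - (3 * t - 2)) / 3 := by
            ring
          rw [heq, abs_div]
          have h3 : |(3 : ℝ)| = 3 := by norm_num
          rw [h3]
          exact div_le_div_of_nonneg_right hd (by norm_num) |>.trans_eq rfl
  -- C - C ⊇ [-1,1]
  have key : ∀ t ∈ Set.Icc (-1 : ℝ) 1, ∃ c₁ ∈ C, ∃ c₂ ∈ C, -c₁ + c₂ = t := by
    intro t ht
    set D : Set ℝ := (fun p : ℝ × ℝ => -p.1 + p.2) '' (C ×ˢ C) with hD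
    have hDcomp : IsCompact D := (hc.prod hc).image (by fun_prop)
    have hDclosed : IsClosed D := hDcomp.isClosed
    have htD : t ∈ D := by
      rw [← hDclosed.closure_eq]
      rw [Metric.mem_closure_iff]
      intro ε hε
      obtain ⟨n, hn⟩ := exists_pow_lt_of_lt_one (show (0:ℝ) < ε/2 by linarith)
        (show (1:ℝ)/3 < 1 by norm_num)
      obtain ⟨c₁, hc₁, c₂, hc₂, hd⟩ := approx n t ht
      refine ⟨-c₁ + c₂, ⟨(c₁, c₂), ⟨hc₁, hc₂⟩, rfl⟩, ?_⟩
      rw [Real.dist_eq, abs_sub_comm]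
      have : (2 : ℝ) / 3 ^ n = 2 * (1/3) ^ n := by
        rw [div_pow, one_pow]; ring
      calc |(-c₁ + c₂) - t| ≤ 2 / 3 ^ n := hd
        _ = 2 * (1/3)^n := this
        _ < 2 * (ε/2) := by nlinarith [pow_pos (show (0:ℝ) < 1/3 by norm_num) n]
        _ = ε := by ring
    obtain ⟨⟨c₁, c₂⟩, ⟨hc₁, hc₂⟩, heq⟩ := htD
    exact ⟨c₁, hc₁, c₂, hc₂, heq⟩
  constructor
  · rintro ⟨q, hql, ⟨p, hp, rfl⟩⟩
    simp only [Set.mem_setOf_eq] at hql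
    obtain ⟨⟨hp11, hp12⟩, ⟨hp21, hp22⟩⟩ := hp
    have hT : -p.1 + p.2 ∈ Set.Icc (-1 : ℝ) 1 := ⟨by linarith, by linarith⟩
    obtain ⟨c₁, hc₁, c₂, hc₂, hcc⟩ := key _ hT
    refine ⟨((c₁ + i₁) / 3, (c₂ + i₂) / 3), ?_, ⟨(c₁, c₂), ⟨hc₁, hc₂⟩, rfl⟩⟩
    simp only [Set.mem_setOf_eq]
    linarith
  · rintro ⟨q, hql, ⟨p, ⟨hp1, hp2⟩, rfl⟩⟩
    exact ⟨_, hql, ⟨p, ⟨hsub hp1, hsub hp2⟩, rfl⟩⟩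
end

section
/- Suppose n ≥ 2, A_i ⊂ {0,…,n−1}, K_i = ∪_{a∈A_i}(K_i+a)/n ⊂ [0,1], and m ∈ ℤ^l with ∏ m_i ≠ 0. If x ∈ n^{-1}[u, u+1] for some u ∈ ℤ and i = (i₁,…,i_l) ∈ ∏ A_i satisfies n^{-1}[u,u+1] ⊂ n^{-1}(⟨m, i⟩ + [m_*, m^*]), then H_x ∩ S_i([0,1]^l) = S_i(H_{f_i(x)} ∩ [0,1]^l), where f_i(x) = nx − u + t with t = u − ⟨m, i⟩, S_i(y) = (y + i)/n, H_x = {y ∈ ℝ^l : ⟨m, y⟩ = x}, m_* = Σ_{m_i<0} m_i, m^* = Σ_{m_i>0} m_i. -/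
/-- Multi-dynamical-system lemma: if `x ∈ n⁻¹[u, u+1]` and the digit vector
`i = (i₁,…,i_l) ∈ ∏ A_i` satisfies `n⁻¹[u,u+1] ⊆ n⁻¹(⟨m,i⟩ + [m_*, m^*])`, then
`H_x ∩ S_i([0,1]^l) = S_i(H_{f_i(x)} ∩ [0,1]^l)`, where `f_i(x) = nx - u + t`,
`t = u - ⟨m,i⟩`, `S_i(y) = (y + i)/n`, `H_x = {y : ⟨m,y⟩ = x}`,
`m_* = Σ_{m_i<0} m_i` and `m^* = Σ_{m_i>0} m_i`. -/
theorem hyperplane_cube_intersection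
    (n l : ℕ) (hn : 2 ≤ n) (A : Fin l → Set ℕ) (hA : ∀ j, A j ⊆ Set.Iio n)
    (K : Fin l → Set ℝ) (hne : ∀ j, (K j).Nonempty) (hc : ∀ j, IsCompact (K j))
    (hsub : ∀ j, K j ⊆ Set.Icc (0 : ℝ) 1)
    (hself : ∀ j, K j = ⋃ a ∈ A j, (fun x : ℝ => (x + (a : ℝ)) / n) '' K j)
    (m : Fin l → ℤ) (hm : ∏ j, m j ≠ 0)
    (x : ℝ) (u : ℤ) (iv : Fin l → ℕ) (hiv : ∀ j, iv j ∈ A j)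
    (hx : x ∈ Set.Icc ((u : ℝ) / n) (((u : ℝ) + 1) / n))
    (hcov : Set.Icc ((u : ℝ) / n) (((u : ℝ) + 1) / n) ⊆
      (fun y : ℝ => (y + ∑ j, (m j : ℝ) * (iv j : ℝ)) / n) ''
        Set.Icc ((∑ j, min (m j) 0 : ℤ) : ℝ) ((∑ j, max (m j) 0 : ℤ) : ℝ)) :
    {y : Fin l → ℝ | ∑ j, (m j : ℝ) * y j = x} ∩
      ((fun y : Fin l → ℝ => fun j => (y j + (iv j : ℝ)) / n) ''
        Set.univ.pi fun _ => Set.Icc (0 : ℝ) 1)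
    = (fun y : Fin l → ℝ => fun j => (y j + (iv j : ℝ)) / n) ''
        ({y : Fin l → ℝ |
            ∑ j, (m j : ℝ) * y j = n * x - u + ((u : ℝ) - ∑ j, (m j : ℝ) * (iv j : ℝ))} ∩
          Set.univ.pi fun _ => Set.Icc (0 : ℝ) 1) := by
  have hn0 : (n : ℝ) ≠ 0 := by positivity
  have key : ∀ y : Fin l → ℝ,
      ∑ j, (m j : ℝ) * ((y j + (iv j : ℝ)) / n)
        = (∑ j, (m j : ℝ) * y j + ∑ j, (m j : ℝ) * (iv j : ℝ)) / n := by
    intro y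
    rw [← Finset.sum_add_distrib, Finset.sum_div]
    exact Finset.sum_congr rfl fun j _ => by ring
  ext z
  simp only [Set.mem_inter_iff, Set.mem_setOf_eq, Set.mem_image]
  constructor
  · rintro ⟨hz, y, hy, rfl⟩
    refine ⟨y, ⟨?_, hy⟩, rfl⟩
    rw [key] at hz
    field_simp at hz
    linarith
  · rintro ⟨y, ⟨hy1, hy2⟩, rfl⟩
    refine ⟨?_, y, hy2, rfl⟩
    rw [key]
    field_simp
    linarith
end
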